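/- arXiv:2505.00523 — 10 statements merged into one kernel-verified Lean document; each statement's English description precedes it below -/
import Mathlib

section
/- For every integer n ≥ 1, the complete bipartite graph K_{n,n+1} has exactly n²+n edges and does not contain two vertices of the same degree joined by a path of length three. -/
open SimpleGraph

/-- A simple graph `G` contains two vertices of the same degree joined by a path of
length three if there exist four pairwise distinct vertices `a, x, y, b` such that
`ax`, `xy`, `yb` are edges of `G` and `a` and `b` have equal degree. -/
def HasEqPath3 {V : Type*} [Fintype V] [DecidableEq V] (G : SimpleGraph V)
    [DecidableRel G.Adj] : Prop :=
  ∃ a x y b : V, a ≠ x ∧ a ≠ y ∧ a ≠ b ∧ x ≠ y ∧ x ≠ b ∧ y ≠ b ∧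
    G.Adj a x ∧ G.Adj x y ∧ G.Adj y b ∧ G.degree a = G.degree b

instance {V W : Type*} : DecidableRel (completeBipartiteGraph V W).Adj := fun a b => by
  simp only [completeBipartiteGraph]
  infer_instance

lemma degree_inl {α β : Type*} [Fintype α] [Fintype β] [DecidableEq α] [DecidableEq β]
    (v : α) : (completeBipartiteGraph α β).degree (Sum.inl v) = Fintype.card β := by
  rw [← SimpleGraph.card_neighborFinset_eq_degree]
  have : (completeBipartiteGraph α β).neighborFinset (Sum.inl v)
      = Finset.univ.map ⟨Sum.inr, Sum.inr_injective⟩ := by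
    ext w
    rw [SimpleGraph.mem_neighborFinset]
    cases w <;> simp [completeBipartiteGraph]
  rw [this, Finset.card_map, Finset.card_univ]

lemma degree_inr {α β : Type*} [Fintype α] [Fintype β] [DecidableEq α] [DecidableEq β]
    (v : β) : (completeBipartiteGraph α β).degree (Sum.inr v) = Fintype.card α := by
  rw [← SimpleGraph.card_neighborFinset_eq_degree]
  have : (completeBipartiteGraph α β).neighborFinset (Sum.inr v)
      = Finset.univ.map ⟨Sum.inl, Sum.inl_injective⟩ := by
    ext w
    rw [SimpleGraph.mem_neighborFinset]
    cases w <;> simp [completeBipartiteGraph]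
  rw [this, Finset.card_map, Finset.card_univ]

theorem completeBipartite_extremal_odd (n : ℕ) (hn : 1 ≤ n) :
    (completeBipartiteGraph (Fin n) (Fin (n + 1))).edgeFinset.card = n ^ 2 + n ∧
    ¬ HasEqPath3 (completeBipartiteGraph (Fin n) (Fin (n + 1))) := by
  constructor
  · have h := SimpleGraph.sum_degrees_eq_twice_card_edges
      (completeBipartiteGraph (Fin n) (Fin (n + 1)))
    rw [Fintype.sum_sum_type] at h
    simp only [degree_inl, degree_inr, Fintype.card_fin, Finset.sum_const,
      Finset.card_univ, smul_eq_mul] at h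
    nlinarith [h]
  · rintro ⟨a, x, y, b, _, _, _, _, _, _, hax, hxy, hyb, hdeg⟩
    cases a <;> cases x <;> cases y <;> cases b <;>
      simp only [completeBipartiteGraph, Sum.isLeft_inl, Sum.isRight_inl, Sum.isLeft_inr,
        Sum.isRight_inr, and_true, true_and, and_false, false_and, or_false, false_or,
        Bool.false_eq_true, or_self] at hax hxy hyb <;>
      first
        | (rw [degree_inl, degree_inr, Fintype.card_fin, Fintype.card_fin] at hdeg; omega)
        | (rw [degree_inr, degree_inl, Fintype.card_fin, Fintype.card_fin] at hdeg; omega)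
end

section
/- For every integer n ≥ 2, the complete bipartite graph K_{n−1,n+1} has exactly n²−1 edges and does not contain two vertices of the same degree joined by a path of length three. -/
open SimpleGraph

lemma degL {V W : Type*} [Fintype V] [Fintype W] [DecidableEq V] [DecidableEq W] (v : V) :
    (completeBipartiteGraph V W).degree (Sum.inl v) = Fintype.card W := by
  rw [← card_neighborFinset_eq_degree, neighborFinset_eq_filter,
    show Finset.filter ((completeBipartiteGraph V W).Adj (Sum.inl v)) Finset.univ
      = Finset.univ.map ⟨Sum.inr, Sum.inr_injective⟩ by ext x; cases x <;> simp]
  simp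

lemma degR {V W : Type*} [Fintype V] [Fintype W] [DecidableEq V] [DecidableEq W] (w : W) :
    (completeBipartiteGraph V W).degree (Sum.inr w) = Fintype.card V := by
  rw [← card_neighborFinset_eq_degree, neighborFinset_eq_filter,
    show Finset.filter ((completeBipartiteGraph V W).Adj (Sum.inr w)) Finset.univ
      = Finset.univ.map ⟨Sum.inl, Sum.inl_injective⟩ by ext x; cases x <;> simp]
  simp

theorem completeBipartite_extremal_even (n : ℕ) (hn : 2 ≤ n) :
    (completeBipartiteGraph (Fin (n - 1)) (Fin (n + 1))).edgeFinset.card = n ^ 2 - 1 ∧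
    ¬ HasEqPath3 (completeBipartiteGraph (Fin (n - 1)) (Fin (n + 1))) := by
  constructor
  · obtain ⟨m, rfl⟩ : ∃ m, n = m + 2 := ⟨n - 2, by omega⟩
    have h := (completeBipartiteGraph (Fin (m + 2 - 1))
      (Fin (m + 2 + 1))).sum_degrees_eq_twice_card_edges
    rw [Fintype.sum_sum_type] at h
    simp only [degL, degR, Fintype.card_fin, Finset.sum_const, Finset.card_univ,
      Fintype.card_fin, smul_eq_mul] at h
    have h1 : (m + 2 - 1) * (m + 2 + 1) = m * m + 4 * m + 3 := by
      show (m + 1) * (m + 3) = _; ring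
    have h2 : (m + 2 + 1) * (m + 2 - 1) = m * m + 4 * m + 3 := by
      show (m + 3) * (m + 1) = _; ring
    have h3 : (m + 2) ^ 2 = m * m + 4 * m + 4 := by ring
    omega
  · rintro ⟨a, x, y, b, -, -, -, -, -, -, hax, hxy, hyb, hdeg⟩
    rcases a with a | a <;> rcases x with x | x <;> rcases y with y | y <;> rcases b with b | b <;>
      simp_all [degL, degR] <;> omega
end

section
/- Under the odd setup with n ≥ 5, either β ≥ Δ − 1 or Δ ≤ n + 1, where Δ denotes the maximum vertex degree of G. -/
open SimpleGraph

lemma sum_range_card_le_sum' (s : Finset ℕ) :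
    ∑ i ∈ Finset.range s.card, i ≤ ∑ i ∈ s, i := by
  suffices h : ∀ m (s : Finset ℕ), s.card = m → ∑ i ∈ Finset.range m, i ≤ ∑ i ∈ s, i from
    h s.card s rfl
  intro m
  induction m with
  | zero => intro s _; simp
  | succ m ih =>
    intro s hc
    have hne : s.Nonempty := Finset.card_pos.mp (by omega)
    have hMs : s.max' hne ∈ s := s.max'_mem hne
    have h1 : (s.erase (s.max' hne)).card = m := by
      rw [Finset.card_erase_of_mem hMs, hc]
      omega
    have h2 : m ≤ s.max' hne := by
      by_contra h
      push_neg at h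
      have hsub : s ⊆ Finset.range (s.max' hne + 1) := fun x hx =>
        Finset.mem_range.mpr (Nat.lt_succ_of_le (Finset.le_max' s x hx))
      have := Finset.card_le_card hsub
      rw [Finset.card_range] at this
      omega
    have hrec := ih (s.erase (s.max' hne)) h1
    have hstep : ∑ i ∈ Finset.range (m+1), i = (∑ i ∈ Finset.range m, i) + m :=
      Finset.sum_range_succ _ m
    have hsum : ∑ i ∈ s.erase (s.max' hne), i + s.max' hne = ∑ i ∈ s, i :=
      Finset.sum_erase_add s _ hMs
    omega

lemma arith_nat' (n D b k k1 k2 S1 S2 S3 : ℕ) (hn : 5 ≤ n) (h1 : n+2 ≤ D)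
    (h3 : b+2 ≤ D) (h4 : k2 + D ≤ 2*n) (hk : 1 ≤ k)
    (h6 : k + (k1+k2) = 2*n+1)
    (A1 : 2*(n^2+n) ≤ S1+S2+S3) (A2 : 2*S1 + k*(k-1) ≤ 2*(k*D))
    (A3 : S2 + k1*D ≤ k1*(2*n+2)) (A4 : S3 ≤ k2*b) : False := by
  zify [hk] at A2
  zify at hn h1 h3 h4 h6 A1 A3 A4
  nlinarith [sq_nonneg (2*(k:ℤ) + 4*n + 3 - 4*D),
    mul_nonneg (by positivity : (0:ℤ) ≤ (k2:ℤ)) (by linarith : (0:ℤ) ≤ (D:ℤ) - 2 - b),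
    mul_nonneg (by linarith : (0:ℤ) ≤ 2*(n:ℤ) - D - k2)
      (by linarith : (0:ℤ) ≤ (D:ℤ) - n - 2)]

theorem small_equal_degree_odd {V : Type*} [Fintype V] [DecidableEq V]
    (n : ℕ) (hn : 5 ≤ n) (G : SimpleGraph V) [DecidableRel G.Adj]
    (hcard : Fintype.card V = 2 * n + 1)
    (hedges : n ^ 2 + n ≤ G.edgeFinset.card)
    (hpath : ¬ HasEqPath3 G)
    (β : ℕ)
    (hβ : IsGreatest {k | ∃ a b : V, a ≠ b ∧ G.degree a = k ∧ G.degree b = k} β) :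
    G.maxDegree - 1 ≤ β ∨ G.maxDegree ≤ n + 1 := by
  classical
  by_cases hDsmall : G.maxDegree ≤ n + 1
  · exact Or.inr hDsmall
  left
  by_contra hcontra
  have hnV : Nonempty V := Fintype.card_pos_iff.mp (by omega)
  obtain ⟨v, hv⟩ := G.exists_maximal_degree_vertex
  set D := G.maxDegree with hDdef
  have hDn : n + 2 ≤ D := by omega
  have hD2n : D ≤ 2 * n := by
    have := G.maxDegree_lt_card_verts
    omega
  have hbD : β + 2 ≤ D := by omega
  obtain ⟨⟨a, b, hab, hda, hdb⟩, hub⟩ := hβ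
  -- every repeated degree is at most β
  have hrep : ∀ w : V, (∃ u, u ≠ w ∧ G.degree u = G.degree w) → G.degree w ≤ β := by
    rintro w ⟨u, hu, hud⟩
    exact hub ⟨w, u, Ne.symm hu, rfl, hud⟩
  have hPv : ¬ (∃ u, u ≠ v ∧ G.degree u = G.degree v) := by
    rintro h
    have := hrep v h
    omega
  set P : V → Prop := fun w => ∃ u, u ≠ w ∧ G.degree u = G.degree w with hPdef
  set T : Finset V := Finset.univ.filter P with hTdef
  set S : Finset V := Finset.univ.filter (fun w => ¬ P w) with hSdef
  set T1 : Finset V := T.filter (fun w => G.Adj v w) with hT1def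
  set T2 : Finset V := T.filter (fun w => ¬ G.Adj v w) with hT2def
  -- Fact A : vertices adjacent to v with repeated degree have small degree
  have factA : ∀ w ∈ T1, G.degree w + D ≤ 2*n + 2 := by
    intro w hw
    have hw' := Finset.mem_filter.mp hw
    have hadj : G.Adj v w := hw'.2
    obtain ⟨u, huw, hud⟩ := (Finset.mem_filter.mp hw'.1).2
    have hwβ : G.degree w ≤ β := hrep w ⟨u, huw, hud⟩
    have huv : u ≠ v := by
      rintro rfl
      rw [← hv] at hud
      omega
    by_contra hcon
    push_neg at hcon
    have hcap : 2 ≤ (G.neighborFinset u ∩ G.neighborFinset v).card := by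
      have hunion : (G.neighborFinset u ∪ G.neighborFinset v).card ≤ 2*n+1 := by
        have h := Finset.card_le_univ (G.neighborFinset u ∪ G.neighborFinset v)
        rwa [hcard] at h
      have hiu := Finset.card_inter_add_card_union (G.neighborFinset u) (G.neighborFinset v)
      rw [G.card_neighborFinset_eq_degree, G.card_neighborFinset_eq_degree] at hiu
      have hvd : G.degree v = D := hv.symm
      omega
    obtain ⟨y, hy, hyw⟩ := Finset.exists_mem_ne (Nat.lt_of_lt_of_le one_lt_two hcap) w
    have hy' := Finset.mem_inter.mp hy
    have hyu : G.Adj u y := (SimpleGraph.mem_neighborFinset _ _ _).mp hy'.1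
    have hyv : G.Adj v y := (SimpleGraph.mem_neighborFinset _ _ _).mp hy'.2
    exact hpath ⟨w, v, y, u, hadj.ne', hyw.symm, Ne.symm huw, hyv.ne, Ne.symm huv,
      hyu.ne', hadj.symm, hyv, hyu.symm, hud.symm⟩
  -- degrees on S are pairwise distinct
  have hSdeg : ∀ w ∈ S, G.degree w ≤ D := fun w _ => G.degree_le_maxDegree w
  have hinj : ∀ x ∈ S, ∀ y ∈ S, D - G.degree x = D - G.degree y → x = y := by
    intro w1 h1 w2 h2 heq
    by_contra hne
    have hd : G.degree w2 = G.degree w1 := by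
      have b1 := hSdeg w1 h1
      have b2 := hSdeg w2 h2
      omega
    exact (Finset.mem_filter.mp h1).2 ⟨w2, Ne.symm hne, hd⟩
  have himg : (S.image (fun w => D - G.degree w)).card = S.card :=
    Finset.card_image_of_injOn (fun x hx y hy h => hinj x hx y hy h)
  have hsum_img : ∑ i ∈ S.image (fun w => D - G.degree w), i
      = ∑ w ∈ S, (D - G.degree w) := Finset.sum_image hinj
  have hL1 := sum_range_card_le_sum' (S.image (fun w => D - G.degree w))
  rw [himg, hsum_img] at hL1
  have hgauss := Finset.sum_range_id_mul_two S.card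
  have hSsplit : (∑ w ∈ S, (D - G.degree w)) + ∑ w ∈ S, G.degree w = S.card * D := by
    rw [← Finset.sum_add_distrib]
    rw [Finset.sum_congr rfl (fun w hw => Nat.sub_add_cancel (hSdeg w hw)),
      Finset.sum_const, smul_eq_mul]
  have hA2 : 2 * (∑ w ∈ S, G.degree w) + S.card * (S.card - 1) ≤ 2 * (S.card * D) := by
    omega
  -- T1 bound
  have hA3 : (∑ w ∈ T1, G.degree w) + T1.card * D ≤ T1.card * (2*n+2) := by
    have h := Finset.sum_le_card_nsmul T1 (fun w => G.degree w + D) (2*n+2) factA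
    rw [Finset.sum_add_distrib, Finset.sum_const, smul_eq_mul, smul_eq_mul] at h
    exact h
  -- T2 bound
  have hA4 : (∑ w ∈ T2, G.degree w) ≤ T2.card * β := by
    have h := Finset.sum_le_card_nsmul T2 (fun w => G.degree w) β
      (fun w hw => hrep w (Finset.mem_filter.mp (Finset.mem_filter.mp hw).1).2)
    rw [smul_eq_mul] at h
    exact h
  -- T2 cardinality bound
  have hk2 : T2.card + D ≤ 2*n := by
    have hsub : T2 ⊆ Finset.univ \ insert v (G.neighborFinset v) := by
      intro w hw
      have hw' := Finset.mem_filter.mp hw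
      have hPw := (Finset.mem_filter.mp hw'.1).2
      have hwv : w ≠ v := by rintro rfl; exact hPv hPw
      rw [Finset.mem_sdiff, Finset.mem_insert]
      refine ⟨Finset.mem_univ _, ?_⟩
      rintro (rfl | hmem)
      · exact hwv rfl
      · exact hw'.2 ((SimpleGraph.mem_neighborFinset _ _ _).mp hmem)
    have h1 := Finset.card_le_card hsub
    rw [Finset.card_sdiff_of_subset (Finset.subset_univ _), Finset.card_univ, hcard,
      Finset.card_insert_of_notMem (by simp), G.card_neighborFinset_eq_degree, ← hv] at h1
    omega
  -- cardinalities
  have hST : T.card + S.card = 2*n+1 := by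
    have h := Finset.card_filter_add_card_filter_not (s := Finset.univ) (p := P)
    rw [Finset.card_univ, hcard] at h
    exact h
  have hT12 : T1.card + T2.card = T.card :=
    Finset.card_filter_add_card_filter_not (s := T) (p := fun w => G.Adj v w)
  have hkpos : 1 ≤ S.card := by
    have hvS : v ∈ S := Finset.mem_filter.mpr ⟨Finset.mem_univ _, hPv⟩
    exact Finset.card_pos.mpr ⟨v, hvS⟩
  -- sum decomposition
  have hsplit1 : (∑ w ∈ T, G.degree w) + (∑ w ∈ S, G.degree w) = ∑ w, G.degree w :=
    Finset.sum_filter_add_sum_filter_not Finset.univ P _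
  have hsplit2 : (∑ w ∈ T1, G.degree w) + (∑ w ∈ T2, G.degree w) = ∑ w ∈ T, G.degree w :=
    Finset.sum_filter_add_sum_filter_not T (fun w => G.Adj v w) _
  have hedge2 : 2*(n^2+n) ≤ (∑ w ∈ S, G.degree w) + ((∑ w ∈ T1, G.degree w)
      + (∑ w ∈ T2, G.degree w)) := by
    have h := G.sum_degrees_eq_twice_card_edges
    omega
  exact arith_nat' n D β S.card T1.card T2.card (∑ w ∈ S, G.degree w)
    (∑ w ∈ T1, G.degree w) (∑ w ∈ T2, G.degree w) hn hDn hbD hk2 hkpos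
    (by omega) (by omega) hA2 hA3 hA4
end

section
/- Under the odd setup, β ≥ 3. -/
open SimpleGraph Finset

lemma gauss_Ioc (c D : ℕ) : 2 * ∑ k ∈ Finset.Ioc c D, (k - c) = (D - c) * (D - c + 1) := by
  induction D with
  | zero => simp
  | succ d ih =>
    rcases le_or_gt (d + 1) c with h | h
    · rw [Finset.Ioc_eq_empty (by omega)]
      have h0 : d + 1 - c = 0 := by omega
      simp [h0]
    · have hc : c ≤ d := by omega
      rw [Finset.sum_Ioc_succ_top hc]
      have h1 : d + 1 - c = (d - c) + 1 := by omega
      rw [Nat.mul_add, ih, h1]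
      ring

lemma sum_deg_le {V : Type*} [Fintype V] [DecidableEq V] (G : SimpleGraph V)
    [DecidableRel G.Adj] (c D : ℕ) (T : Finset V)
    (hD : ∀ v ∈ T, G.degree v ≤ D)
    (hinj : ∀ v ∈ T, ∀ w ∈ T, c < G.degree v → G.degree v = G.degree w → v = w) :
    ∑ v ∈ T, G.degree v ≤ c * T.card + ∑ k ∈ Finset.Ioc c D, (k - c) := by
  classical
  set A := T.filter (fun v => c < G.degree v) with hA
  set B := T.filter (fun v => ¬ c < G.degree v) with hB
  have hsplit : ∑ v ∈ A, G.degree v + ∑ v ∈ B, G.degree v = ∑ v ∈ T, G.degree v :=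
    Finset.sum_filter_add_sum_filter_not T _ _
  have hcardAB : A.card + B.card = T.card :=
    Finset.card_filter_add_card_filter_not _
  have hBsum : ∑ v ∈ B, G.degree v ≤ c * B.card := by
    calc ∑ v ∈ B, G.degree v ≤ ∑ v ∈ B, c := by
          refine Finset.sum_le_sum ?_
          intro v hv
          have := (Finset.mem_filter.mp hv).2
          omega
      _ = c * B.card := by rw [Finset.sum_const, smul_eq_mul, Nat.mul_comm]
  have hAsum : ∑ v ∈ A, G.degree v ≤ c * A.card + ∑ v ∈ A, (G.degree v - c) := by
    have he : c * A.card + ∑ v ∈ A, (G.degree v - c) = ∑ v ∈ A, (c + (G.degree v - c)) := by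
      rw [Finset.sum_add_distrib, Finset.sum_const, smul_eq_mul, Nat.mul_comm]
    rw [he]
    refine Finset.sum_le_sum ?_
    intro v hv
    omega
  have himg : ∑ v ∈ A, (G.degree v - c) = ∑ k ∈ A.image (fun v => G.degree v), (k - c) := by
    rw [Finset.sum_image]
    intro x hx y hy hxy
    exact hinj x (Finset.mem_filter.mp hx).1 y (Finset.mem_filter.mp hy).1
      (Finset.mem_filter.mp hx).2 hxy
  have hsub : A.image (fun v => G.degree v) ⊆ Finset.Ioc c D := by
    intro k hk
    obtain ⟨v, hv, rfl⟩ := Finset.mem_image.mp hk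
    have h1 := (Finset.mem_filter.mp hv).2
    have h2 := hD v (Finset.mem_filter.mp hv).1
    exact Finset.mem_Ioc.mpr ⟨h1, h2⟩
  have hle : ∑ k ∈ A.image (fun v => G.degree v), (k - c) ≤ ∑ k ∈ Finset.Ioc c D, (k - c) :=
    Finset.sum_le_sum_of_subset hsub
  have hmul : c * A.card + c * B.card = c * T.card := by rw [← Nat.mul_add, hcardAB]
  omega

open SimpleGraph Finset

theorem beta_ge_three_odd {V : Type*} [Fintype V] [DecidableEq V]
    (n : ℕ) (hn : 2 ≤ n) (G : SimpleGraph V) [DecidableRel G.Adj]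
    (hcard : Fintype.card V = 2 * n + 1)
    (hedges : n ^ 2 + n ≤ G.edgeFinset.card)
    (hpath : ¬ HasEqPath3 G)
    (β : ℕ)
    (hβ : IsGreatest {k | ∃ a b : V, a ≠ b ∧ G.degree a = k ∧ G.degree b = k} β) :
    3 ≤ β := by
  by_contra hβ3
  have hβ2 : β ≤ 2 := by omega
  obtain ⟨⟨a, b, hab, hda, hdb⟩, hub⟩ := hβ
  obtain ⟨m, rfl⟩ : ∃ m, n = m + 2 := ⟨n - 2, by omega⟩
  -- degree sum lower bound
  have h2 : 2 * ((m + 2) ^ 2 + (m + 2)) ≤ ∑ v, G.degree v := by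
    rw [G.sum_degrees_eq_twice_card_edges]
    omega
  -- no two vertices of degree > 2 share a degree
  have hinj2 : ∀ v ∈ (Finset.univ : Finset V), ∀ w ∈ (Finset.univ : Finset V),
      2 < G.degree v → G.degree v = G.degree w → v = w := by
    intro v _ w _ hv hvw
    by_contra hne
    have : G.degree v ≤ β := hub ⟨v, w, hne, rfl, hvw.symm⟩
    omega
  -- there is a vertex of full degree
  have hu : ∃ u : V, G.degree u = 2 * (m + 2) := by
    by_contra hno
    push_neg at hno
    have hD : ∀ v ∈ (Finset.univ : Finset V), G.degree v ≤ 2 * m + 3 := by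
      intro v _
      have h1 := G.degree_lt_card_verts v
      have h2 := hno v
      omega
    have hb := sum_deg_le G 2 (2 * m + 3) Finset.univ hD hinj2
    have hg := gauss_Ioc 2 (2 * m + 3)
    have hc : (Finset.univ : Finset V).card = 2 * (m + 2) + 1 := by
      rw [Finset.card_univ, hcard]
    have he1 : 2 * m + 3 - 2 = 2 * m + 1 := by omega
    rw [he1] at hg
    nlinarith [h2, hb, hg, hc]
  obtain ⟨u, hdu⟩ := hu
  -- u is adjacent to everything else
  have hdom : ∀ w : V, w ≠ u → G.Adj u w := by
    have hsub : G.neighborFinset u ⊆ Finset.univ.erase u := by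
      intro v hv
      rw [Finset.mem_erase]
      exact ⟨(G.mem_neighborFinset u v |>.mp hv).ne', Finset.mem_univ v⟩
    have hcards : (Finset.univ.erase u).card ≤ (G.neighborFinset u).card := by
      rw [Finset.card_erase_of_mem (Finset.mem_univ u), Finset.card_univ, hcard,
        G.card_neighborFinset_eq_degree, hdu]
      omega
    have heq := Finset.eq_of_subset_of_card_le hsub hcards
    intro w hw
    have : w ∈ G.neighborFinset u := by
      rw [heq, Finset.mem_erase]
      exact ⟨hw, Finset.mem_univ w⟩
    exact (G.mem_neighborFinset u w).mp this
  -- case β ≤ 1 : pure counting contradiction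
  rcases Nat.lt_or_ge β 2 with hβ1 | hβge
  · have hinj1 : ∀ v ∈ (Finset.univ : Finset V), ∀ w ∈ (Finset.univ : Finset V),
        1 < G.degree v → G.degree v = G.degree w → v = w := by
      intro v _ w _ hv hvw
      by_contra hne
      have : G.degree v ≤ β := hub ⟨v, w, hne, rfl, hvw.symm⟩
      omega
    have hD : ∀ v ∈ (Finset.univ : Finset V), G.degree v ≤ 2 * m + 4 := by
      intro v _
      have h1 := G.degree_lt_card_verts v
      omega
    have hb := sum_deg_le G 1 (2 * m + 4) Finset.univ hD hinj1
    have hg := gauss_Ioc 1 (2 * m + 4)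
    have hc : (Finset.univ : Finset V).card = 2 * (m + 2) + 1 := by
      rw [Finset.card_univ, hcard]
    have he1 : 2 * m + 4 - 1 = 2 * m + 3 := by omega
    rw [he1] at hg
    nlinarith [h2, hb, hg, hc]
  -- now β = 2
  have hβeq : β = 2 := by omega
  subst hβeq
  have hau : a ≠ u := by intro h; rw [h, hdu] at hda; omega
  have hbu : b ≠ u := by intro h; rw [h, hdu] at hdb; omega
  -- b has a neighbor y ≠ u
  have hument : ∀ w : V, w ≠ u → u ∈ G.neighborFinset w := by
    intro w hw
    exact (G.mem_neighborFinset w u).mpr (hdom w hw).symm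
  have hother : ∀ w : V, w ≠ u → G.degree w = 2 →
      ∃ y, y ≠ u ∧ G.Adj w y := by
    intro w hw hd2
    have hcard1 : ((G.neighborFinset w).erase u).card = 1 := by
      rw [Finset.card_erase_of_mem (hument w hw), G.card_neighborFinset_eq_degree, hd2]
    obtain ⟨y, hy⟩ := Finset.card_pos.mp (by omega : 0 < ((G.neighborFinset w).erase u).card)
    rw [Finset.mem_erase] at hy
    exact ⟨y, hy.1, (G.mem_neighborFinset w y).mp hy.2⟩
  obtain ⟨y, hyu, hby⟩ := hother b hbu hdb
  by_cases hya : y = a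
  · -- b and a are adjacent; neighborhoods are {u, b} and {u, a}
    have hba : G.Adj b a := hya ▸ hby
    have hub' : u ≠ b := hbu.symm
    have hua' : u ≠ a := hau.symm
    have hnfa : G.neighborFinset a = {u, b} := by
      refine (Finset.eq_of_subset_of_card_le ?_ ?_).symm
      · intro v hv
        rcases Finset.mem_insert.mp hv with h | h
        · rw [h]; exact (G.mem_neighborFinset a u).mpr (hdom a hau).symm
        · rw [Finset.mem_singleton] at h
          rw [h]; exact (G.mem_neighborFinset a b).mpr hba.symm
      · rw [G.card_neighborFinset_eq_degree, hda, Finset.card_pair hub']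
    have hnfb : G.neighborFinset b = {u, a} := by
      refine (Finset.eq_of_subset_of_card_le ?_ ?_).symm
      · intro v hv
        rcases Finset.mem_insert.mp hv with h | h
        · rw [h]; exact (G.mem_neighborFinset b u).mpr (hdom b hbu).symm
        · rw [Finset.mem_singleton] at h
          rw [h]; exact (G.mem_neighborFinset b a).mpr hba
      · rw [G.card_neighborFinset_eq_degree, hdb, Finset.card_pair hua']
    -- the rest set T
    set T : Finset V := ((Finset.univ.erase u).erase a).erase b with hT
    have hmemT : ∀ w, w ∈ T ↔ (w ≠ b ∧ w ≠ a ∧ w ≠ u) := by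
      intro w
      simp [hT, Finset.mem_erase, and_assoc]
    have haU : a ∈ Finset.univ.erase u := Finset.mem_erase.mpr ⟨hau, Finset.mem_univ a⟩
    have hbU : b ∈ (Finset.univ.erase u).erase a :=
      Finset.mem_erase.mpr ⟨hab.symm, Finset.mem_erase.mpr ⟨hbu, Finset.mem_univ b⟩⟩
    have hcardT : T.card = 2 * m + 2 := by
      rw [hT, Finset.card_erase_of_mem hbU, Finset.card_erase_of_mem haU,
        Finset.card_erase_of_mem (Finset.mem_univ u), Finset.card_univ, hcard]
      omega
    -- no vertex in T is adjacent to a or b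
    have hnadj : ∀ w ∈ T, ¬ G.Adj a w ∧ ¬ G.Adj b w := by
      intro w hw
      rw [hmemT] at hw
      constructor
      · intro h
        have : w ∈ G.neighborFinset a := (G.mem_neighborFinset a w).mpr h
        rw [hnfa, Finset.mem_insert, Finset.mem_singleton] at this
        tauto
      · intro h
        have : w ∈ G.neighborFinset b := (G.mem_neighborFinset b w).mpr h
        rw [hnfb, Finset.mem_insert, Finset.mem_singleton] at this
        tauto
    -- no vertex in T has degree 2
    have hdeg2 : ∀ w ∈ T, G.degree w ≠ 2 := by
      intro w hw h2w
      have hwmem := (hmemT w).mp hw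
      obtain ⟨y', hy'u, hwy'⟩ := hother w hwmem.2.2 h2w
      have hy'a : y' ≠ a := by
        intro h; subst h
        exact (hnadj w hw).1 hwy'.symm
      refine hpath ⟨a, u, y', w, hau, hy'a.symm, hwmem.2.1.symm, hy'u.symm,
        hwmem.2.2.symm, (G.ne_of_adj hwy').symm, (hdom a hau).symm,
        hdom y' hy'u, hwy'.symm, by rw [hda, h2w]⟩
    -- degree bound on T
    have hDT : ∀ w ∈ T, G.degree w ≤ 2 * m + 2 := by
      intro w hw
      have hwmem := (hmemT w).mp hw
      have hsub : G.neighborFinset w ⊆ ((Finset.univ.erase w).erase a).erase b := by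
        intro v hv
        have hadj := (G.mem_neighborFinset w v).mp hv
        rw [Finset.mem_erase, Finset.mem_erase, Finset.mem_erase]
        refine ⟨?_, ?_, hadj.ne', Finset.mem_univ v⟩
        · intro h; subst h; exact (hnadj w hw).2 hadj.symm
        · intro h; subst h; exact (hnadj w hw).1 hadj.symm
      have hc := Finset.card_le_card hsub
      rw [Finset.card_erase_of_mem, Finset.card_erase_of_mem,
        Finset.card_erase_of_mem (Finset.mem_univ w), Finset.card_univ, hcard] at hc
      · rw [← G.card_neighborFinset_eq_degree]; omega
      · exact Finset.mem_erase.mpr ⟨hwmem.2.1.symm, Finset.mem_univ a⟩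
      · exact Finset.mem_erase.mpr ⟨hab.symm,
          Finset.mem_erase.mpr ⟨hwmem.1.symm, Finset.mem_univ b⟩⟩
    -- injectivity of degrees on T above 1
    have hinjT : ∀ v ∈ T, ∀ w ∈ T, 1 < G.degree v → G.degree v = G.degree w → v = w := by
      intro v hv w hw h1 hvw
      by_contra hne
      have hle : G.degree v ≤ 2 := hub ⟨v, w, hne, rfl, hvw.symm⟩
      have : G.degree v = 2 := by omega
      exact hdeg2 v hv this
    have hbT := sum_deg_le G 1 (2 * m + 2) T hDT hinjT
    have hg := gauss_Ioc 1 (2 * m + 2)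
    have he1 : 2 * m + 2 - 1 = 2 * m + 1 := by omega
    rw [he1] at hg
    -- decompose the full degree sum
    have e3 : G.degree b + ∑ w ∈ T, G.degree w
        = ∑ w ∈ (Finset.univ.erase u).erase a, G.degree w := by
      rw [hT]; exact Finset.add_sum_erase _ (fun w => G.degree w) hbU
    have e2 : G.degree a + ∑ w ∈ (Finset.univ.erase u).erase a, G.degree w
        = ∑ w ∈ Finset.univ.erase u, G.degree w :=
      Finset.add_sum_erase _ (fun w => G.degree w) haU
    have e1 : G.degree u + ∑ w ∈ Finset.univ.erase u, G.degree w
        = ∑ v, G.degree v :=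
      Finset.add_sum_erase _ (fun w => G.degree w) (Finset.mem_univ u)
    rw [hcardT] at hbT
    rw [hda, hdb] at *
    nlinarith [h2, hbT, hg, e1, e2, e3, hdu]
  · -- y ≠ a : direct path a - u - y - b
    exact absurd ⟨a, u, y, b, hau, fun h => hya h.symm, hab, Ne.symm hyu,
      hbu.symm, (G.ne_of_adj hby).symm, (hdom a hau).symm, hdom y hyu, hby.symm,
      by rw [hda, hdb]⟩ hpath
end

section
/- Let G be a simple graph that contains no two vertices of the same degree joined by a path of length three, and let v be a vertex of G. If there exists a vertex u adjacent to v such that u and v have at least two common neighbors, then deg(w) ≠ deg(u) for every vertex w adjacent to v with w ≠ u. -/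
open SimpleGraph

theorem degree_neq_of_common_neighbors {V : Type*} [Fintype V] [DecidableEq V]
    (G : SimpleGraph V) [DecidableRel G.Adj]
    (hpath : ¬ HasEqPath3 G) (v u : V) (huv : G.Adj v u)
    (hcommon : 2 ≤ (G.neighborFinset u ∩ G.neighborFinset v).card) :
    ∀ w : V, G.Adj v w → w ≠ u → G.degree w ≠ G.degree u := by
  intro w hvw hwu hdeg
  obtain ⟨x1, hx1, x2, hx2, hx12⟩ :=
    Finset.one_lt_card.mp
      (lt_of_lt_of_le one_lt_two hcommon : 1 < (G.neighborFinset u ∩ G.neighborFinset v).card)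
  -- pick a common neighbor distinct from w
  obtain ⟨x, hx, hxw⟩ : ∃ x, x ∈ G.neighborFinset u ∩ G.neighborFinset v ∧ x ≠ w := by
    by_cases h : x1 = w
    · exact ⟨x2, hx2, fun he => hx12 (he ▸ h ▸ rfl)⟩
    · exact ⟨x1, hx1, h⟩
  rw [Finset.mem_inter, mem_neighborFinset, mem_neighborFinset] at hx
  obtain ⟨hxu, hxv⟩ := hx
  exact hpath ⟨u, x, v, w,
    G.ne_of_adj hxu, (G.ne_of_adj huv).symm, Ne.symm hwu,
    (G.ne_of_adj hxv).symm, hxw, G.ne_of_adj hvw,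
    hxu, hxv.symm, hvw, hdeg.symm⟩
end

section
/- Under the even setup, β ≤ n+1; moreover, if β = n+1, then G is isomorphic to the complete bipartite graph K_{n+1,n−1}. -/
open SimpleGraph

open Finset in
private lemma eqpath_star {V : Type*} [Fintype V] [DecidableEq V] {G : SimpleGraph V}
    [DecidableRel G.Adj] (hpath : ¬ HasEqPath3 G) {a x y b : V}
    (hab : a ≠ b) (hay : a ≠ y) (hxb : x ≠ b) (hxy : x ≠ y)
    (hdeg : G.degree a = G.degree b)
    (h1 : G.Adj a x) (h2 : G.Adj x y) (h3 : G.Adj y b) : False :=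
  hpath ⟨a, x, y, b, h1.ne, hay, hab, hxy, hxb, h3.ne, h1, h2, h3, hdeg⟩

open Finset in
private lemma deg_sum_comm {V : Type*} [Fintype V] [DecidableEq V] (G : SimpleGraph V)
    [DecidableRel G.Adj] (X Y : Finset V) :
    ∑ x ∈ X, (G.neighborFinset x ∩ Y).card = ∑ y ∈ Y, (G.neighborFinset y ∩ X).card := by
  have h : ∀ (Q : Finset V) (x : V), (G.neighborFinset x ∩ Q).card
      = ∑ y ∈ Q, if G.Adj x y then 1 else 0 := by
    intro Q x
    rw [← Finset.sum_filter]
    rw [Finset.sum_const, smul_eq_mul, mul_one]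
    congr 1
    apply Finset.ext
    intro z
    simp [SimpleGraph.mem_neighborFinset, and_comm]
  simp only [h]
  rw [Finset.sum_comm]
  apply Finset.sum_congr rfl
  intro y _
  apply Finset.sum_congr rfl
  intro x _
  simp [SimpleGraph.adj_comm]

private lemma gauss_shift (R k : ℕ) :
    2 * (∑ ρ ∈ Finset.Icc (R + 1) (R + k), (ρ - R)) = k * (k + 1) := by
  induction k with
  | zero => simp
  | succ k ih =>
    rw [show R + (k+1) = (R + k) + 1 by ring,
      Finset.sum_Icc_succ_top (by omega : R + 1 ≤ R + k + 1)]
    have h : R + k + 1 - R = k + 1 := by omega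
    rw [h]
    ring_nf
    ring_nf at ih
    omega

private lemma arith_main {n m q w t : ℤ} (hn : 3 ≤ n)
    (hR1 : t + 2*n = w + 2*m + 2) (hq1 : q + t = m) (hm1 : n + 1 ≤ m)
    (hm2n : m + 2 ≤ 2*n) (hq0 : 0 ≤ q)
    (master : 2*(n^2 - 1) ≤ 2*m + 2*(q*(1+(q+w))) + 2*t + 2*(w*q) + 2*(w*t)) :
    m = n + 1 ∧ q = 0 := by
  have e2 : t = m - q := by linarith
  have e1 : w = 2*n - 2 - m - q := by linarith
  subst e2
  subst e1
  have hmle : m ≤ n + 1 := by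
    nlinarith [master, sq_nonneg (m - n - 2), mul_nonneg hq0 (by linarith : (0:ℤ) ≤ m - n + 1)]
  have hme : m = n + 1 := le_antisymm hmle hm1
  have hqle : q ≤ 0 := by nlinarith [master, hme]
  exact ⟨hme, le_antisymm hqle hq0⟩

set_option maxHeartbeats 1600000 in
open Finset in
private lemma core {V : Type*} [Fintype V] [DecidableEq V] {G : SimpleGraph V}
    [DecidableRel G.Adj] {n : ℕ} (hn : 3 ≤ n) (hcard : Fintype.card V = 2 * n)
    (hedges : n ^ 2 - 1 ≤ G.edgeFinset.card) (hpath : ¬ HasEqPath3 G)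
    {a b : V} (hab : a ≠ b) (hdeg : G.degree a = G.degree b) (hd : n + 1 ≤ G.degree a) :
    G.degree a = n + 1 ∧
      ∀ u v, G.Adj u v ↔ ¬ (u ∈ G.neighborFinset a ↔ v ∈ G.neighborFinset a) := by
  classical
  set A := (G.neighborFinset a).erase b with hA_def
  set B := (G.neighborFinset b).erase a with hB_def
  set S := A ∩ B with hS_def
  set W := ((univ : Finset V) \ {a, b}) \ (A ∪ B) with hW_def
  have hmemA : ∀ x, x ∈ A ↔ x ≠ b ∧ G.Adj a x := by
    intro x; rw [hA_def, mem_erase, mem_neighborFinset]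
  have hmemB : ∀ x, x ∈ B ↔ x ≠ a ∧ G.Adj b x := by
    intro x; rw [hB_def, mem_erase, mem_neighborFinset]
  have hmemW : ∀ x, x ∈ W ↔ ((x ≠ a ∧ x ≠ b) ∧ (x ∉ A ∧ x ∉ B)) := by
    intro x
    rw [hW_def, mem_sdiff, mem_sdiff, mem_union]
    simp only [mem_univ, true_and, mem_insert, mem_singleton]
    tauto
  have haA : a ∉ A := fun h => G.irrefl ((hmemA a).1 h).2
  have hbB : b ∉ B := fun h => G.irrefl ((hmemB b).1 h).2
  have hbA : b ∉ A := fun h => ((hmemA b).1 h).1 rfl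
  have haB : a ∉ B := fun h => ((hmemB a).1 h).1 rfl
  have haW : a ∉ W := fun h => (((hmemW a).1 h).1).1 rfl
  have hbW : b ∉ W := fun h => (((hmemW b).1 h).1).2 rfl
  have hSA : S ⊆ A := inter_subset_left
  have hSB : S ⊆ B := inter_subset_right
  have hWA : ∀ x ∈ W, x ∉ A := fun x hx => (((hmemW x).1 hx).2).1
  have hWB : ∀ x ∈ W, x ∉ B := fun x hx => (((hmemW x).1 hx).2).2
  -- no edges between A and B
  have h1 : ∀ x ∈ A, ∀ y ∈ B, x ≠ y → ¬ G.Adj x y := by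
    intro x hx y hy hxy hadj
    obtain ⟨hxb, hax⟩ := (hmemA x).1 hx
    obtain ⟨hya, hby⟩ := (hmemB y).1 hy
    exact eqpath_star hpath hab (Ne.symm hya) hxb hxy hdeg hax hadj hby.symm
  -- neighborhoods of S
  have hNS : ∀ s ∈ S, G.neighborFinset s
      = insert a (insert b (G.neighborFinset s ∩ W)) := by
    intro s hs
    apply Finset.Subset.antisymm
    · intro z hz
      have hadj : G.Adj s z := (mem_neighborFinset _ _ _).1 hz
      by_cases hza : z = a
      · simp [hza]
      by_cases hzb : z = b
      · simp [hzb]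
      have hzA : z ∉ A := fun hzA => h1 z hzA s (hSB hs) hadj.ne' hadj.symm
      have hzB : z ∉ B := fun hzB => h1 s (hSA hs) z hzB hadj.ne hadj
      have hzW : z ∈ W := (hmemW z).2 ⟨⟨hza, hzb⟩, hzA, hzB⟩
      simp only [mem_insert]
      right; right
      exact mem_inter.2 ⟨hz, hzW⟩
    · intro z hz
      simp only [mem_insert] at hz
      rcases hz with rfl | rfl | hz
      · exact (mem_neighborFinset _ _ _).2 (((hmemA s).1 (hSA hs)).2).symm
      · exact (mem_neighborFinset _ _ _).2 (((hmemB s).1 (hSB hs)).2).symm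
      · exact (mem_inter.1 hz).1
  set r : V → ℕ := fun v => (G.neighborFinset v ∩ W).card with hr_def
  have hdegS : ∀ s ∈ S, G.degree s = 2 + r s := by
    intro s hs
    have : G.degree s = (G.neighborFinset s).card := rfl
    rw [this, hNS s hs,
      card_insert_of_notMem (fun h => by
        simp only [mem_insert] at h
        rcases h with h | h
        · exact hab h
        · exact haW (mem_inter.1 h).2),
      card_insert_of_notMem (fun h => hbW (mem_inter.1 h).2)]
    have hrr : r s = (G.neighborFinset s ∩ W).card := rfl
    omega
  set m := A.card with hm_def
  set t := S.card with ht_def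
  set w := W.card with hw_def
  have hBcard : B.card = m := by
    by_cases hadj : G.Adj a b
    · have h₁ : b ∈ G.neighborFinset a := (mem_neighborFinset _ _ _).2 hadj
      have h₂ : a ∈ G.neighborFinset b := (mem_neighborFinset _ _ _).2 hadj.symm
      have e₁ : m = G.degree a - 1 := by
        rw [hm_def, hA_def, card_erase_of_mem h₁]; rfl
      have e₂ : B.card = G.degree b - 1 := by
        rw [hB_def, card_erase_of_mem h₂]; rfl
      rw [e₁, e₂, hdeg]
    · have h₁ : b ∉ G.neighborFinset a := fun h => hadj ((mem_neighborFinset _ _ _).1 h)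
      have h₂ : a ∉ G.neighborFinset b := fun h => hadj ((mem_neighborFinset _ _ _).1 h).symm
      have e₁ : m = G.degree a := by rw [hm_def, hA_def, erase_eq_of_notMem h₁]; rfl
      have e₂ : B.card = G.degree b := by rw [hB_def, erase_eq_of_notMem h₂]; rfl
      rw [e₁, e₂, hdeg]
  have hmn : n ≤ m := by
    have h₁ : (G.neighborFinset a).card - 1 ≤ m := by
      rw [hm_def, hA_def]; exact Finset.pred_card_le_card_erase
    have h₂ : (G.neighborFinset a).card = G.degree a := rfl
    omega
  have hABuniv : A ∪ B ⊆ (univ : Finset V) \ {a, b} := by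
    intro x hx
    rw [mem_sdiff]
    refine ⟨mem_univ x, ?_⟩
    simp only [mem_insert, mem_singleton]
    rcases mem_union.1 hx with h | h
    · obtain ⟨hxb, hax⟩ := (hmemA x).1 h
      push_neg
      exact ⟨hax.ne', hxb⟩
    · obtain ⟨hxa, hbx⟩ := (hmemB x).1 h
      push_neg
      exact ⟨hxa, hbx.ne'⟩
  have huniv2 : ((univ : Finset V) \ {a, b}).card = 2 * n - 2 := by
    rw [card_sdiff_of_subset (subset_univ _), card_univ, hcard]
    congr 1
    rw [card_insert_of_notMem (by simp [hab]), card_singleton]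
  have hWc : w + (A ∪ B).card = 2 * n - 2 := by
    have h₁ := card_sdiff_of_subset hABuniv
    have h₂ := card_le_card hABuniv
    rw [huniv2] at h₁ h₂
    rw [← hW_def, ← hw_def] at h₁
    omega
  have hUc : (A ∪ B).card + t = m + m := by
    have h := card_union_add_card_inter A B
    rw [hBcard, ← hS_def, ← ht_def, ← hm_def] at h
    omega
  have hR1 : t + 2 * n = w + 2 * m + 2 := by omega
  have hm2n : m + 2 ≤ 2 * n := by
    have h₁ : A ⊆ (univ : Finset V) \ {a, b} :=
      fun x hx => hABuniv (mem_union_left _ hx)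
    have h₂ := card_le_card h₁
    rw [huniv2] at h₂
    omega
  have hrw : ∀ s ∈ S, r s ≤ w := by
    intro s _
    exact card_le_card inter_subset_right
  -- pigeonhole: two vertices in S with equal degree
  obtain ⟨s₁, hs₁, s₂, hs₂, hne12, hr12⟩ :
      ∃ s₁ ∈ S, ∃ s₂ ∈ S, s₁ ≠ s₂ ∧ r s₁ = r s₂ := by
    have hlt : (range (w + 1)).card < t := by rw [card_range]; omega
    exact exists_ne_map_eq_of_card_lt_of_maps_to hlt
      (fun s hs => mem_range.2 (Nat.lt_succ_of_le (hrw s hs)))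
  have hdeg12 : G.degree s₁ = G.degree s₂ := by
    rw [hdegS s₁ hs₁, hdegS s₂ hs₂, hr12]
  have hnadj : ¬ G.Adj a b := by
    intro hadj
    refine eqpath_star hpath hne12 ?_ ?_ hab hdeg12 ?_ hadj ?_
    · exact fun h => hbA (h ▸ hSA hs₁)
    · exact fun h => haB (h ▸ hSB hs₂)
    · exact (((hmemA s₁).1 (hSA hs₁)).2).symm
    · exact ((hmemB s₂).1 (hSB hs₂)).2
  have hAN : A = G.neighborFinset a := by
    rw [hA_def]
    exact erase_eq_of_notMem (fun h => hnadj ((mem_neighborFinset _ _ _).1 h))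
  have hBN : B = G.neighborFinset b := by
    rw [hB_def]
    exact erase_eq_of_notMem (fun h => hnadj ((mem_neighborFinset _ _ _).1 h).symm)
  have hmd : m = G.degree a := by rw [hm_def, hAN]; rfl
  have hm1 : n + 1 ≤ m := by omega
  have htw4 : w + 4 ≤ t := by omega
  -- the two side classes
  set A' := A \ B with hA'_def
  set B' := B \ A with hB'_def
  set q := A'.card with hq_def
  have hq1 : q + t = m := by
    have h := card_sdiff_add_card_inter A B
    rw [← hA'_def, ← hq_def, ← hS_def, ← ht_def, ← hm_def] at h
    omega
  have hq2 : B'.card = q := by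
    have h₁ := card_sdiff_add_card_inter B A
    rw [inter_comm B A, hBcard, ← hB'_def, ← hS_def, ← ht_def] at h₁
    omega
  have hpartition : ∀ x : V, x = a ∨ x = b ∨ x ∈ A' ∨ x ∈ B' ∨ x ∈ S ∨ x ∈ W := by
    intro x
    by_cases hxa : x = a
    · exact Or.inl hxa
    by_cases hxb : x = b
    · exact Or.inr (Or.inl hxb)
    by_cases hxA : x ∈ A <;> by_cases hxB : x ∈ B
    · exact Or.inr (Or.inr (Or.inr (Or.inr (Or.inl (mem_inter.2 ⟨hxA, hxB⟩)))))
    · exact Or.inr (Or.inr (Or.inl (mem_sdiff.2 ⟨hxA, hxB⟩)))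
    · exact Or.inr (Or.inr (Or.inr (Or.inl (mem_sdiff.2 ⟨hxB, hxA⟩))))
    · exact Or.inr (Or.inr (Or.inr (Or.inr (Or.inr
        ((hmemW x).2 ⟨⟨hxa, hxb⟩, hxA, hxB⟩)))))
  -- disjointness of the parts
  have hd4 : Disjoint S W := by
    rw [Finset.disjoint_left]; intro x hx hxW; exact hWA x hxW (hSA hx)
  have hd3 : Disjoint B' (S ∪ W) := by
    rw [Finset.disjoint_left]; intro x hx hx'
    have hxB : x ∈ B := (mem_sdiff.1 hx).1
    have hxA : x ∉ A := (mem_sdiff.1 hx).2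
    rcases mem_union.1 hx' with h | h
    · exact hxA (hSA h)
    · exact hWB x h hxB
  have hd2 : Disjoint A' (B' ∪ (S ∪ W)) := by
    rw [Finset.disjoint_left]; intro x hx hx'
    have hxA : x ∈ A := (mem_sdiff.1 hx).1
    have hxB : x ∉ B := (mem_sdiff.1 hx).2
    rcases mem_union.1 hx' with h | h
    · exact hxB (mem_sdiff.1 h).1
    rcases mem_union.1 h with h | h
    · exact hxB (hSB h)
    · exact hWA x h hxA
  have hd1 : Disjoint ({a, b} : Finset V) (A' ∪ (B' ∪ (S ∪ W))) := by
    rw [Finset.disjoint_left]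
    intro x hx hx'
    simp only [mem_insert, mem_singleton] at hx
    rcases mem_union.1 hx' with h | h'
    · rcases hx with rfl | rfl
      · exact haA (mem_sdiff.1 h).1
      · exact hbA (mem_sdiff.1 h).1
    rcases mem_union.1 h' with h | h'
    · rcases hx with rfl | rfl
      · exact haB (mem_sdiff.1 h).1
      · exact hbB (mem_sdiff.1 h).1
    rcases mem_union.1 h' with h | h
    · rcases hx with rfl | rfl
      · exact haA (hSA h)
      · exact hbA (hSA h)
    · rcases hx with rfl | rfl
      · exact haW h
      · exact hbW h
  have huniv : (univ : Finset V) = {a, b} ∪ (A' ∪ (B' ∪ (S ∪ W))) := by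
    apply Finset.Subset.antisymm _ (subset_univ _)
    intro x _
    rcases hpartition x with rfl | rfl | h | h | h | h
    · exact mem_union_left _ (mem_insert_self _ _)
    · exact mem_union_left _ (by simp)
    · exact mem_union_right _ (mem_union_left _ h)
    · exact mem_union_right _ (mem_union_right _ (mem_union_left _ h))
    · exact mem_union_right _ (mem_union_right _ (mem_union_right _ (mem_union_left _ h)))
    · exact mem_union_right _ (mem_union_right _ (mem_union_right _ (mem_union_right _ h)))
  have hsplit : ∑ x, G.degree x
      = G.degree a + G.degree b + (∑ x ∈ A', G.degree x) + (∑ x ∈ B', G.degree x)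
        + (∑ x ∈ S, G.degree x) + (∑ x ∈ W, G.degree x) := by
    conv_lhs => rw [huniv]
    rw [sum_union hd1, sum_union hd2, sum_union hd3, sum_union hd4, sum_pair hab]
    ring
  set σ := ∑ s ∈ S, r s with hσ_def
  set DW := ∑ x ∈ W, r x with hDW_def
  have bS : ∑ s ∈ S, G.degree s = 2 * t + σ := by
    calc ∑ s ∈ S, G.degree s = ∑ s ∈ S, (2 + r s) := sum_congr rfl hdegS
    _ = (∑ _s ∈ S, 2) + ∑ s ∈ S, r s := sum_add_distrib
    _ = 2 * t + σ := by rw [sum_const, smul_eq_mul, ← ht_def, ← hσ_def, mul_comm]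
  have bA' : ∑ x ∈ A', G.degree x ≤ q * (1 + (q + w)) := by
    have hpt : ∀ x ∈ A', G.degree x ≤ 1 + (q + w) := by
      intro x hx
      obtain ⟨hxA, hxB⟩ := mem_sdiff.1 hx
      have hsub : G.neighborFinset x ⊆ insert a (A' ∪ W) := by
        intro z hz
        have hadj : G.Adj x z := (mem_neighborFinset _ _ _).1 hz
        have hzB : z ∉ B := fun hzB => h1 x hxA z hzB hadj.ne hadj
        rcases hpartition z with rfl | rfl | h | h | h | h
        · exact mem_insert_self _ _
        · exact absurd ((hmemB x).2 ⟨(((hmemA x).1 hxA).2).ne', hadj.symm⟩) hxB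
        · exact mem_insert_of_mem (mem_union_left _ h)
        · exact absurd (mem_sdiff.1 h).1 hzB
        · exact absurd (hSB h) hzB
        · exact mem_insert_of_mem (mem_union_right _ h)
      calc G.degree x = (G.neighborFinset x).card := rfl
      _ ≤ (insert a (A' ∪ W)).card := card_le_card hsub
      _ ≤ (A' ∪ W).card + 1 := card_insert_le _ _
      _ ≤ 1 + (q + w) := by
          have := card_union_le A' W
          omega
    calc ∑ x ∈ A', G.degree x ≤ A'.card * (1 + (q + w)) :=
      sum_le_card_nsmul A' _ _ hpt
    _ = q * (1 + (q + w)) := by rw [← hq_def]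
  have bB' : ∑ x ∈ B', G.degree x ≤ q * (1 + (q + w)) := by
    have hpt : ∀ x ∈ B', G.degree x ≤ 1 + (q + w) := by
      intro x hx
      obtain ⟨hxB, hxA⟩ := mem_sdiff.1 hx
      have hsub : G.neighborFinset x ⊆ insert b (B' ∪ W) := by
        intro z hz
        have hadj : G.Adj x z := (mem_neighborFinset _ _ _).1 hz
        have hzA : z ∉ A := fun hzA => h1 z hzA x hxB hadj.ne' hadj.symm
        rcases hpartition z with rfl | rfl | h | h | h | h
        · exact absurd ((hmemA x).2 ⟨(((hmemB x).1 hxB).2).ne', hadj.symm⟩) hxA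
        · exact mem_insert_self _ _
        · exact absurd (mem_sdiff.1 h).1 hzA
        · exact mem_insert_of_mem (mem_union_left _ h)
        · exact absurd (hSA h) hzA
        · exact mem_insert_of_mem (mem_union_right _ h)
      calc G.degree x = (G.neighborFinset x).card := rfl
      _ ≤ (insert b (B' ∪ W)).card := card_le_card hsub
      _ ≤ (B' ∪ W).card + 1 := card_insert_le _ _
      _ ≤ 1 + (q + w) := by
          have := card_union_le B' W
          omega
    calc ∑ x ∈ B', G.degree x ≤ B'.card * (1 + (q + w)) :=
      sum_le_card_nsmul B' _ _ hpt
    _ = q * (1 + (q + w)) := by rw [hq2]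
  -- neighborhoods of W vertices
  have hWnbr : ∀ x ∈ W, G.degree x = (G.neighborFinset x ∩ A').card
      + ((G.neighborFinset x ∩ B').card + ((G.neighborFinset x ∩ S).card + r x)) := by
    intro x hx
    have hxA : x ∉ A := hWA x hx
    have hxB : x ∉ B := hWB x hx
    have hNeq : G.neighborFinset x = (G.neighborFinset x ∩ A')
        ∪ ((G.neighborFinset x ∩ B') ∪ ((G.neighborFinset x ∩ S) ∪ (G.neighborFinset x ∩ W))) := by
      apply Finset.Subset.antisymm
      · intro z hz
        have hadj : G.Adj x z := (mem_neighborFinset _ _ _).1 hz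
        rcases hpartition z with rfl | rfl | h | h | h | h
        · exact absurd ((hmemA x).2 ⟨fun hxb => hbW (hxb ▸ hx), hadj.symm⟩) hxA
        · exact absurd ((hmemB x).2 ⟨fun hxa => haW (hxa ▸ hx), hadj.symm⟩) hxB
        · exact mem_union_left _ (mem_inter.2 ⟨hz, h⟩)
        · exact mem_union_right _ (mem_union_left _ (mem_inter.2 ⟨hz, h⟩))
        · exact mem_union_right _ (mem_union_right _ (mem_union_left _ (mem_inter.2 ⟨hz, h⟩)))
        · exact mem_union_right _ (mem_union_right _ (mem_union_right _ (mem_inter.2 ⟨hz, h⟩)))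
      · intro z hz
        rcases mem_union.1 hz with h | h'
        · exact (mem_inter.1 h).1
        rcases mem_union.1 h' with h | h'
        · exact (mem_inter.1 h).1
        rcases mem_union.1 h' with h | h
        · exact (mem_inter.1 h).1
        · exact (mem_inter.1 h).1
    have dj1 : Disjoint (G.neighborFinset x ∩ A')
        ((G.neighborFinset x ∩ B') ∪ ((G.neighborFinset x ∩ S) ∪ (G.neighborFinset x ∩ W))) := by
      rw [Finset.disjoint_left]
      intro z hz hz'
      have hzA' : z ∈ A' := (mem_inter.1 hz).2
      have hzrest : z ∈ B' ∪ (S ∪ W) := by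
        rcases mem_union.1 hz' with h | h'
        · exact mem_union_left _ (mem_inter.1 h).2
        rcases mem_union.1 h' with h | h
        · exact mem_union_right _ (mem_union_left _ (mem_inter.1 h).2)
        · exact mem_union_right _ (mem_union_right _ (mem_inter.1 h).2)
      exact (disjoint_left.1 hd2) hzA' hzrest
    have dj2 : Disjoint (G.neighborFinset x ∩ B')
        ((G.neighborFinset x ∩ S) ∪ (G.neighborFinset x ∩ W)) := by
      rw [Finset.disjoint_left]
      intro z hz hz'
      have hzB' : z ∈ B' := (mem_inter.1 hz).2
      have hzrest : z ∈ S ∪ W := by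
        rcases mem_union.1 hz' with h | h
        · exact mem_union_left _ (mem_inter.1 h).2
        · exact mem_union_right _ (mem_inter.1 h).2
      exact (disjoint_left.1 hd3) hzB' hzrest
    have dj3 : Disjoint (G.neighborFinset x ∩ S) (G.neighborFinset x ∩ W) := by
      rw [Finset.disjoint_left]
      intro z hz hz'
      exact (disjoint_left.1 hd4) (mem_inter.1 hz).2 (mem_inter.1 hz').2
    have hcardeq : (G.neighborFinset x).card = (G.neighborFinset x ∩ A').card
        + ((G.neighborFinset x ∩ B').card + ((G.neighborFinset x ∩ S).card
          + (G.neighborFinset x ∩ W).card)) := by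
      conv_lhs => rw [hNeq]
      rw [card_union_of_disjoint dj1, card_union_of_disjoint dj2,
        card_union_of_disjoint dj3]
    exact hcardeq
  have bW : ∑ x ∈ W, G.degree x = (∑ x ∈ W, (G.neighborFinset x ∩ A').card)
      + ((∑ x ∈ W, (G.neighborFinset x ∩ B').card) + (σ + DW)) := by
    calc ∑ x ∈ W, G.degree x
        = ∑ x ∈ W, ((G.neighborFinset x ∩ A').card
          + ((G.neighborFinset x ∩ B').card + ((G.neighborFinset x ∩ S).card + r x))) :=
          sum_congr rfl hWnbr
    _ = _ := by
        rw [sum_add_distrib, sum_add_distrib, sum_add_distrib]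
        congr 2
        rw [hσ_def, deg_sum_comm G W S]
  have bWA' : ∑ x ∈ W, (G.neighborFinset x ∩ A').card ≤ w * q := by
    calc ∑ x ∈ W, (G.neighborFinset x ∩ A').card ≤ W.card * q := by
          apply sum_le_card_nsmul
          intro x _
          rw [hq_def]
          exact card_le_card inter_subset_right
    _ = w * q := by rw [← hw_def]
  have bWB' : ∑ x ∈ W, (G.neighborFinset x ∩ B').card ≤ w * q := by
    calc ∑ x ∈ W, (G.neighborFinset x ∩ B').card ≤ W.card * q := by
          apply sum_le_card_nsmul
          intro x _
          rw [← hq2]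
          exact card_le_card inter_subset_right
    _ = w * q := by rw [← hw_def]
  -- the level structure on S
  set bigL := (range (w+1)).filter (fun ρ => 1 < (S.filter (fun s => r s = ρ)).card)
    with hbigL_def
  set R := if h : bigL.Nonempty then bigL.max' h else 0 with hR_def2
  have hRub : ∀ ρ ∈ bigL, ρ ≤ R := by
    intro ρ hρ
    have hne : bigL.Nonempty := ⟨ρ, hρ⟩
    rw [hR_def2, dif_pos hne]
    exact le_max' _ _ hρ
  have hRw : R ≤ w := by
    rw [hR_def2]
    split_ifs with h
    · have h₁ := max'_mem bigL h
      have h₂ : bigL.max' h ∈ range (w + 1) :=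
        mem_of_subset (by rw [hbigL_def]; exact filter_subset _ _) h₁
      rw [mem_range] at h₂
      omega
    · omega
  have hlevel_big : ∀ ρ, ∀ s ∈ S, ∀ s' ∈ S, s ≠ s' → r s = ρ → r s' = ρ → ρ ∈ bigL := by
    intro ρ s hs s' hs' hss hrs hrs'
    rw [hbigL_def, mem_filter, mem_range]
    constructor
    · have := hrw s hs; omega
    · exact Finset.one_lt_card.2
        ⟨s, mem_filter.2 ⟨hs, hrs⟩, s', mem_filter.2 ⟨hs', hrs'⟩, hss⟩
  have hlevel_nonadj : ∀ u₁ ∈ S, ∀ u₂ ∈ S, u₁ ≠ u₂ → r u₁ = r u₂ →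
      ∀ x ∈ G.neighborFinset u₁ ∩ W, ∀ y ∈ G.neighborFinset u₂ ∩ W, ¬ G.Adj x y := by
    intro u₁ hu₁ u₂ hu₂ hne hre x hx y hy hadj
    have hdegu : G.degree u₁ = G.degree u₂ := by rw [hdegS _ hu₁, hdegS _ hu₂, hre]
    refine eqpath_star hpath hne ?_ ?_ hadj.ne hdegu ?_ hadj ?_
    · exact fun h => hWA y (mem_inter.1 hy).2 (h ▸ hSA hu₁)
    · exact fun h => hWA x (mem_inter.1 hx).2 (by rw [h]; exact hSA hu₂)
    · exact (mem_neighborFinset _ _ _).1 (mem_inter.1 hx).1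
    · exact ((mem_neighborFinset _ _ _).1 (mem_inter.1 hy).1).symm
  obtain ⟨k, hk⟩ : ∃ k, w = R + k := ⟨w - R, by omega⟩
  have hptW : ∀ x ∈ W, r x + 1 ≤ w := by
    intro x hx
    have hsub : G.neighborFinset x ∩ W ⊆ W.erase x := by
      intro z hz
      rw [mem_erase]
      exact ⟨fun h => G.irrefl (h ▸ (mem_neighborFinset _ _ _).1 (mem_inter.1 hz).1),
        (mem_inter.1 hz).2⟩
    have h₁ := card_le_card hsub
    rw [card_erase_of_mem hx] at h₁
    have h₂ : 0 < w := by rw [hw_def]; exact card_pos.2 ⟨x, hx⟩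
    have h₃ : r x = (G.neighborFinset x ∩ W).card := rfl
    omega
  have K1 : 2 * σ ≤ 2 * (R * t) + k * (k + 1) := by
    set High := S.filter (fun s => R < r s) with hHigh_def
    have hinj : ∀ x ∈ High, ∀ y ∈ High, r x = r y → x = y := by
      intro x hx y hy hxy
      by_contra hne
      have hmem := hlevel_big (r x) x (mem_filter.1 hx).1 y (mem_filter.1 hy).1 hne rfl hxy.symm
      have h₁ := hRub _ hmem
      have h₂ := (mem_filter.1 hx).2
      omega
    have hsplit2 : σ = (∑ s ∈ S.filter (fun s => ¬ R < r s), r s) + ∑ s ∈ High, r s := by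
      rw [hσ_def, hHigh_def, ← sum_filter_add_sum_filter_not S (fun s => R < r s) r, add_comm]
    have hcards : (S.filter (fun s => ¬ R < r s)).card + High.card = t := by
      rw [ht_def, hHigh_def, ← card_filter_add_card_filter_not (s := S)
        (p := fun s => R < r s), add_comm]
    have hb1 : ∑ s ∈ S.filter (fun s => ¬ R < r s), r s
        ≤ (S.filter (fun s => ¬ R < r s)).card * R := by
      apply sum_le_card_nsmul
      intro x hx
      have := (mem_filter.1 hx).2
      omega
    have hb2 : ∑ s ∈ High, r s = R * High.card + ∑ s ∈ High, (r s - R) := by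
      calc ∑ s ∈ High, r s = ∑ s ∈ High, (R + (r s - R)) := by
            apply sum_congr rfl
            intro s hs
            have := (mem_filter.1 hs).2
            omega
      _ = (∑ _s ∈ High, R) + ∑ s ∈ High, (r s - R) := sum_add_distrib
      _ = R * High.card + ∑ s ∈ High, (r s - R) := by
            rw [sum_const, smul_eq_mul, mul_comm]
    have hb3 : 2 * (∑ s ∈ High, (r s - R)) ≤ k * (k + 1) := by
      have himg : ∑ ρ ∈ High.image r, (ρ - R) = ∑ s ∈ High, (r s - R) := sum_image hinj
      have hsub : High.image r ⊆ Icc (R + 1) (R + k) := by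
        intro ρ hρ
        obtain ⟨s, hsH, rfl⟩ := mem_image.1 hρ
        rw [mem_Icc]
        have hp₁ := (mem_filter.1 hsH).2
        have hp₂ := hrw s (mem_filter.1 hsH).1
        omega
      have hle : ∑ ρ ∈ High.image r, (ρ - R) ≤ ∑ ρ ∈ Icc (R + 1) (R + k), (ρ - R) :=
        sum_le_sum_of_subset hsub
      have hg := gauss_shift R k
      omega
    have hmul : (S.filter (fun s => ¬ R < r s)).card * R + R * High.card = R * t := by
      rw [← hcards]; ring
    omega
  have keymain : 2 * σ + DW + 8 * k ≤ 2 * (w * t) := by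
    by_cases h1R : 1 ≤ R
    · have hne : bigL.Nonempty := by
        by_contra hemp
        rw [hR_def2, dif_neg hemp] at h1R
        omega
      have hRmem : R ∈ bigL := by rw [hR_def2, dif_pos hne]; exact max'_mem _ _
      have hcard2 := (mem_filter.1 ((hbigL_def ▸ hRmem))).2
      obtain ⟨u₁, hu₁f, u₂, hu₂f, hu12⟩ := Finset.one_lt_card.1 hcard2
      obtain ⟨hu₁S, hru₁⟩ := mem_filter.1 hu₁f
      obtain ⟨hu₂S, hru₂⟩ := mem_filter.1 hu₂f
      have hno := hlevel_nonadj u₁ hu₁S u₂ hu₂S hu12 (hru₁.trans hru₂.symm)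
      have hX₁W : G.neighborFinset u₁ ∩ W ⊆ W := inter_subset_right
      have hX₂W : G.neighborFinset u₂ ∩ W ⊆ W := inter_subset_right
      have hX₁c : (G.neighborFinset u₁ ∩ W).card = R := hru₁
      have hX₂c : (G.neighborFinset u₂ ∩ W).card = R := hru₂
      -- vertices of X₁ have few neighbours in W
      have hptX : ∀ x ∈ G.neighborFinset u₁ ∩ W, r x ≤ k := by
        intro x hx
        have hsub : G.neighborFinset x ∩ W ⊆ W \ (G.neighborFinset u₂ ∩ W) := by
          intro z hz
          rw [mem_sdiff]
          refine ⟨(mem_inter.1 hz).2, fun hzX₂ => ?_⟩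
          exact hno x hx z hzX₂ ((mem_neighborFinset _ _ _).1 (mem_inter.1 hz).1)
        have hcs : (W \ (G.neighborFinset u₂ ∩ W)).card = w - R := by
          rw [card_sdiff_of_subset hX₂W, hX₂c, hw_def]
        have h₁ := card_le_card hsub
        rw [hcs] at h₁
        have h₂ : r x = (G.neighborFinset x ∩ W).card := rfl
        omega
      have hDWsplit : (∑ x ∈ W \ (G.neighborFinset u₁ ∩ W), r x)
          + ∑ x ∈ G.neighborFinset u₁ ∩ W, r x = DW := by
        rw [hDW_def]; exact sum_sdiff hX₁W
      have hb4 : ∑ x ∈ G.neighborFinset u₁ ∩ W, r x ≤ R * k := by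
        calc ∑ x ∈ G.neighborFinset u₁ ∩ W, r x
            ≤ (G.neighborFinset u₁ ∩ W).card * k := sum_le_card_nsmul _ _ _ hptX
        _ = R * k := by rw [hX₁c]
      obtain ⟨w1, hw1⟩ : ∃ w1, w = w1 + 1 := by
        refine ⟨w - 1, ?_⟩
        have : 0 < R := h1R
        omega
      have hb5 : ∑ x ∈ W \ (G.neighborFinset u₁ ∩ W), r x ≤ k * w1 := by
        have hcs : (W \ (G.neighborFinset u₁ ∩ W)).card = w - R := by
          rw [card_sdiff_of_subset hX₁W, hX₁c, hw_def]
        calc ∑ x ∈ W \ (G.neighborFinset u₁ ∩ W), r x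
            ≤ (W \ (G.neighborFinset u₁ ∩ W)).card * w1 := by
              apply sum_le_card_nsmul
              intro x hx
              have := hptW x ((mem_sdiff.1 hx).1)
              omega
        _ ≤ k * w1 := by
              rw [hcs]
              apply Nat.mul_le_mul_right
              omega
      have hkt : k * (w + 4) ≤ k * t := Nat.mul_le_mul_left k htw4
      -- now pure (linear-in-atoms) arithmetic
      have hkt2 : k * w + 4 * k ≤ k * t := by
        calc k * w + 4 * k = k * (w + 4) := by ring
        _ ≤ k * t := hkt
      have e6 : k * w = k * w1 + k := by rw [hw1]; ring
      have e7 : k * w = R * k + k * k := by rw [hk]; ring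
      have e8 : 2 * (w * t) = 2 * (R * t) + 2 * (k * t) := by rw [hk]; ring
      linarith [K1, hb4, hb5, hDWsplit, hkt2, e6, e7, e8]
    · have hR0 : R = 0 := by omega
      rcases Nat.eq_zero_or_pos w with hw0 | hwpos
      · have hWemp : W = ∅ := card_eq_zero.1 (by omega)
        have hDW0 : DW = 0 := by rw [hDW_def, hWemp, sum_empty]
        have hσ0 : σ = 0 := by
          rw [hσ_def]
          apply sum_eq_zero
          intro s hs
          have := hrw s hs
          omega
        have hk0 : k = 0 := by omega
        rw [hσ0, hDW0, hk0, hw0]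
        simp
      · have hDWb : DW ≤ w * (w - 1) := by
          rw [hDW_def]
          calc ∑ x ∈ W, r x ≤ W.card * (w - 1) := by
                apply sum_le_card_nsmul
                intro x hx
                have := hptW x hx
                omega
          _ = w * (w - 1) := by rw [← hw_def]
        obtain ⟨w1, hw1⟩ : ∃ w1, w = w1 + 1 := ⟨w - 1, by omega⟩
        have hw1' : w - 1 = w1 := by omega
        rw [hw1'] at hDWb
        have hkt : w * (w + 4) ≤ w * t := Nat.mul_le_mul_left w htw4
        have hkw : k = w := by omega
        rw [hR0] at K1
        rw [hkw] at K1 ⊢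
        have h₁ : w * (w + 1) = w * w + w := by ring
        have h₂ : w * w = w * w1 + w := by rw [hw1]; ring
        have h₃ : w * (w + 4) = w * w + 4 * w := by ring
        have h₄ : 2 * (0 * t) = 0 := by ring
        linarith [K1, hDWb, hkt, h₁, h₂, h₃, h₄]
  have key1 : 2 * σ + DW ≤ 2 * (w * t) := le_trans (Nat.le_add_right _ _) keymain
  have keyEq : 2 * σ + DW = 2 * (w * t) →
      (∀ x ∈ W, ∀ y ∈ W, ¬ G.Adj x y) ∧ (∀ s ∈ S, G.neighborFinset s ∩ W = W) := by
    intro heq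
    have hk0 : k = 0 := by omega
    by_cases hw0 : w = 0
    · have hWemp : W = ∅ := card_eq_zero.1 (by omega)
      constructor
      · intro x hx
        rw [hWemp] at hx
        exact absurd hx (notMem_empty x)
      · intro s hs
        rw [hWemp, inter_empty]
    · have hne : bigL.Nonempty := by
        by_contra hemp
        have : R = 0 := by rw [hR_def2, dif_neg hemp]
        omega
      have hRmem : R ∈ bigL := by rw [hR_def2, dif_pos hne]; exact max'_mem _ _
      have hcard2 := (mem_filter.1 (hbigL_def ▸ hRmem)).2
      obtain ⟨u₁, hu₁f, u₂, hu₂f, hu12⟩ := Finset.one_lt_card.1 hcard2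
      obtain ⟨hu₁S, hru₁⟩ := mem_filter.1 hu₁f
      obtain ⟨hu₂S, hru₂⟩ := mem_filter.1 hu₂f
      have hno := hlevel_nonadj u₁ hu₁S u₂ hu₂S hu12 (hru₁.trans hru₂.symm)
      have hX₁eq : G.neighborFinset u₁ ∩ W = W := by
        apply Finset.eq_of_subset_of_card_le inter_subset_right
        have h₁ : (G.neighborFinset u₁ ∩ W).card = R := hru₁
        omega
      have hX₂eq : G.neighborFinset u₂ ∩ W = W := by
        apply Finset.eq_of_subset_of_card_le inter_subset_right
        have h₁ : (G.neighborFinset u₂ ∩ W).card = R := hru₂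
        omega
      have hWW : ∀ x ∈ W, ∀ y ∈ W, ¬ G.Adj x y := by
        intro x hx y hy
        exact hno x (by rw [hX₁eq]; exact hx) y (by rw [hX₂eq]; exact hy)
      refine ⟨hWW, ?_⟩
      have hDW0 : DW = 0 := by
        rw [hDW_def]
        apply sum_eq_zero
        intro x hx
        have hemp : G.neighborFinset x ∩ W = ∅ := by
          rw [Finset.eq_empty_iff_forall_notMem]
          intro z hz
          exact hWW x hx z (mem_inter.1 hz).2
            ((mem_neighborFinset _ _ _).1 (mem_inter.1 hz).1)
        show (G.neighborFinset x ∩ W).card = 0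
        rw [hemp, card_empty]
      have hallw : ∀ s' ∈ S, r s' = w := by
        by_contra hcon
        push_neg at hcon
        obtain ⟨s₀, hs₀, hs₀w⟩ := hcon
        have hlt : σ < t * w := by
          have h₁ : ∑ s' ∈ S, r s' < ∑ _s' ∈ S, w :=
            sum_lt_sum (fun i hi => hrw i hi)
              ⟨s₀, hs₀, lt_of_le_of_ne (hrw s₀ hs₀) hs₀w⟩
          calc σ = ∑ s' ∈ S, r s' := hσ_def
          _ < ∑ _s' ∈ S, w := h₁
          _ = t * w := by rw [sum_const, smul_eq_mul, ← ht_def]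
        have hc : t * w = w * t := mul_comm t w
        omega
      intro s hs
      apply Finset.eq_of_subset_of_card_le inter_subset_right
      have h₁ := hallw s hs
      have h₂ : r s = (G.neighborFinset s ∩ W).card := rfl
      omega
  -- master counting
  have hsum2 : 2 * (n ^ 2 - 1) ≤ ∑ x, G.degree x := by
    rw [G.sum_degrees_eq_twice_card_edges]
    omega
  have hdegb : G.degree b = m := by rw [← hdeg]; exact hmd.symm
  have master2 : 2 * (n ^ 2 - 1)
      ≤ 2 * m + 2 * (q * (1 + (q + w))) + 2 * t + 2 * (w * q) + 2 * (w * t) := by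
    have hdega' : G.degree a = m := hmd.symm
    linarith [hsum2, hsplit, bA', bB', bS, bW, bWA', bWB', key1, hdega', hdegb]
  have hsq : 1 ≤ n ^ 2 := Nat.one_le_pow _ _ (by omega)
  have hq0int : (0:ℤ) ≤ (q:ℤ) := Int.natCast_nonneg q
  obtain ⟨hm_eq, hq0⟩ : m = n + 1 ∧ q = 0 := by
    zify [hsq] at master2
    have hR1' : (t:ℤ) + 2*n = w + 2*m + 2 := by exact_mod_cast hR1
    have hq1' : (q:ℤ) + t = m := by exact_mod_cast hq1
    have hm1' : (n:ℤ) + 1 ≤ m := by exact_mod_cast hm1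
    have hm2n' : (m:ℤ) + 2 ≤ 2*n := by exact_mod_cast hm2n
    have hn' : (3:ℤ) ≤ n := by exact_mod_cast hn
    obtain ⟨h₁, h₂⟩ := arith_main hn' hR1' hq1' hm1' hm2n' hq0int master2
    constructor
    · exact_mod_cast h₁
    · exact_mod_cast h₂
  have ht_eq : t = n + 1 := by omega
  have hw_eq2 : w = n - 3 := by omega
  have hA'emp : A' = ∅ := card_eq_zero.1 (by omega)
  have hB'emp : B' = ∅ := card_eq_zero.1 (by omega)
  have hWA'0 : ∑ x ∈ W, (G.neighborFinset x ∩ A').card = 0 := by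
    apply sum_eq_zero
    intro x _
    rw [hA'emp, inter_empty, card_empty]
  have hWB'0 : ∑ x ∈ W, (G.neighborFinset x ∩ B').card = 0 := by
    apply sum_eq_zero
    intro x _
    rw [hB'emp, inter_empty, card_empty]
  have hA'0 : ∑ x ∈ A', G.degree x = 0 := by rw [hA'emp, sum_empty]
  have hB'0 : ∑ x ∈ B', G.degree x = 0 := by rw [hB'emp, sum_empty]
  have hexact : ∑ x, G.degree x = 2 * m + 2 * t + 2 * σ + DW := by
    rw [hsplit, ← hmd, hdegb, bS, bW, hWA'0, hWB'0, hA'0, hB'0]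
    ring
  have hwt_val : w * t + (2 * n + 3) = n ^ 2 := by
    obtain ⟨j, hj⟩ : ∃ j, n = j + 3 := ⟨n - 3, by omega⟩
    rw [hw_eq2, ht_eq, hj]
    have hj3 : j + 3 - 3 = j := by omega
    rw [hj3]
    ring
  have hkeyge : 2 * (w * t) ≤ 2 * σ + DW := by
    have h₁ : 2 * (n ^ 2 - 1) ≤ 2 * m + 2 * t + 2 * σ + DW := by
      rw [← hexact]; exact hsum2
    zify [hsq] at h₁ ⊢
    have h₂ : (w:ℤ) * t + (2*n + 3) = (n:ℤ)^2 := by exact_mod_cast hwt_val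
    have hm' : (m:ℤ) = n + 1 := by exact_mod_cast hm_eq
    have ht' : (t:ℤ) = n + 1 := by exact_mod_cast ht_eq
    linarith
  have heqkey : 2 * σ + DW = 2 * (w * t) := le_antisymm key1 hkeyge
  obtain ⟨hWW, hXW⟩ := keyEq heqkey
  -- final structure
  have hAeqB : A = B := by
    apply Finset.Subset.antisymm
    · rw [← sdiff_eq_empty_iff_subset]; exact hA'emp
    · rw [← sdiff_eq_empty_iff_subset]; exact hB'emp
  have hSeqA : S = A := by rw [hS_def, ← hAeqB, inter_self]
  have hdega : G.degree a = n + 1 := by omega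
  refine ⟨hdega, ?_⟩
  have hmemNa : ∀ x, x ∈ G.neighborFinset a ↔ x ∈ S := by
    intro x
    rw [hSeqA, hAN]
  have hclass : ∀ v, v ∉ G.neighborFinset a → v = a ∨ v = b ∨ v ∈ W := by
    intro v hv
    rcases hpartition v with h | h | h | h | h | h
    · exact Or.inl h
    · exact Or.inr (Or.inl h)
    · rw [hA'emp] at h; exact absurd h (notMem_empty v)
    · rw [hB'emp] at h; exact absurd h (notMem_empty v)
    · exact absurd ((hmemNa v).2 h) hv
    · exact Or.inr (Or.inr h)
  intro u v
  constructor
  · intro hadj hiff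
    by_cases hu : u ∈ G.neighborFinset a
    · have hv : v ∈ G.neighborFinset a := hiff.1 hu
      have huS : u ∈ S := (hmemNa u).1 hu
      have hvS : v ∈ S := (hmemNa v).1 hv
      exact h1 u (hSA huS) v (hSB hvS) hadj.ne hadj
    · have hv : v ∉ G.neighborFinset a := fun h => hu (hiff.2 h)
      rcases hclass u hu with rfl | rfl | huW <;> rcases hclass v hv with rfl | rfl | hvW
      · exact G.irrefl hadj
      · exact hnadj hadj
      · exact hWA v hvW (hAN ▸ (mem_neighborFinset _ _ _).2 hadj)
      · exact hnadj hadj.symm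
      · exact G.irrefl hadj
      · exact hWB v hvW (hBN ▸ (mem_neighborFinset _ _ _).2 hadj)
      · exact hWA u huW (hAN ▸ (mem_neighborFinset _ _ _).2 hadj.symm)
      · exact hWB u huW (hBN ▸ (mem_neighborFinset _ _ _).2 hadj.symm)
      · exact hWW u huW v hvW hadj
  · intro hne
    by_cases hu : u ∈ G.neighborFinset a
    · have hv : v ∉ G.neighborFinset a := fun h => hne (iff_of_true hu h)
      have huS : u ∈ S := (hmemNa u).1 hu
      rcases hclass v hv with rfl | rfl | hvW
      · exact ((mem_neighborFinset _ _ _).1 hu).symm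
      · exact ((mem_neighborFinset _ _ _).1 (hBN ▸ hSB huS)).symm
      · have hvm : v ∈ G.neighborFinset u ∩ W := by rw [hXW u huS]; exact hvW
        exact (mem_neighborFinset _ _ _).1 (mem_inter.1 hvm).1
    · have hv : v ∈ G.neighborFinset a := by
        by_contra hv
        exact hne (iff_of_false hu hv)
      have hvS : v ∈ S := (hmemNa v).1 hv
      rcases hclass u hu with rfl | rfl | huW
      · exact (mem_neighborFinset _ _ _).1 hv
      · exact (mem_neighborFinset _ _ _).1 (hBN ▸ hSB hvS)
      · have hum : u ∈ G.neighborFinset v ∩ W := by rw [hXW v hvS]; exact huW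
        exact ((mem_neighborFinset _ _ _).1 (mem_inter.1 hum).1).symm

theorem large_equal_degree_even {V : Type*} [Fintype V] [DecidableEq V]
    (n : ℕ) (hn : 3 ≤ n) (G : SimpleGraph V) [DecidableRel G.Adj]
    (hcard : Fintype.card V = 2 * n)
    (hedges : n ^ 2 - 1 ≤ G.edgeFinset.card)
    (hpath : ¬ HasEqPath3 G)
    (β : ℕ)
    (hβ : IsGreatest {k | ∃ a b : V, a ≠ b ∧ G.degree a = k ∧ G.degree b = k} β) :
    β ≤ n + 1 ∧ (β = n + 1 →
      Nonempty (G ≃g completeBipartiteGraph (Fin (n + 1)) (Fin (n - 1)))) := by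
  classical
  obtain ⟨⟨a, b, hab, ha, hb⟩, -⟩ := hβ
  by_cases hβn : n + 1 ≤ β
  · have hd : n + 1 ≤ G.degree a := ha ▸ hβn
    obtain ⟨hdega, hadj⟩ := core hn hcard hedges hpath hab (ha.trans hb.symm) hd
    have hβeq : β = n + 1 := by rw [← ha, hdega]
    refine ⟨hβeq.le, fun _ => ?_⟩
    set P := G.neighborFinset a with hP
    have hPcard : P.card = n + 1 := hdega
    have hcard1 : Fintype.card {x // x ∈ P} = n + 1 := by
      rw [Fintype.card_coe]; exact hPcard
    have hcard2 : Fintype.card {x // ¬ x ∈ P} = n - 1 := by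
      rw [Fintype.card_subtype_compl, hcard, Fintype.card_coe, hPcard]
      omega
    let e₁ : {x // x ∈ P} ≃ Fin (n + 1) := Fintype.equivFinOfCardEq hcard1
    let e₂ : {x // ¬ x ∈ P} ≃ Fin (n - 1) := Fintype.equivFinOfCardEq hcard2
    let e : V ≃ (Fin (n + 1) ⊕ Fin (n - 1)) :=
      (Equiv.sumCompl (· ∈ P)).symm.trans (Equiv.sumCongr e₁ e₂)
    refine ⟨⟨e, ?_⟩⟩
    intro u v
    show (completeBipartiteGraph _ _).Adj (e u) (e v) ↔ G.Adj u v
    rw [hadj u v]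
    by_cases hu : u ∈ P <;> by_cases hv : v ∈ P <;>
      simp [e, Equiv.sumCompl_symm_apply_of_pos, Equiv.sumCompl_symm_apply_of_neg,
        hu, hv]
  · push_neg at hβn
    exact ⟨by omega, fun h => by omega⟩
end

section
/- Under the even setup, 3 ≤ β ≤ Δ, where Δ denotes the maximum vertex degree of G. -/
open SimpleGraph Finset

lemma gauss_icc (M : ℕ) (hM : 3 ≤ M) : 2 * (∑ i ∈ Icc 3 M, i) + 6 = M * (M+1) := by
  have h1 : (∑ i ∈ Ico 0 3, i) + (∑ i ∈ Ico 3 (M+1), i) = ∑ i ∈ Ico 0 (M+1), i :=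
    Finset.sum_Ico_consecutive _ (by omega) (by omega)
  have h2 : (∑ i ∈ range (M+1), i) * 2 = (M+1) * M := Finset.sum_range_id_mul_two (M+1)
  rw [Finset.range_eq_Ico] at h2
  have h3 : (∑ i ∈ Ico 0 3, i) = 3 := by decide
  have h4 : Ico 3 (M+1) = Icc 3 M := Finset.Ico_add_one_right_eq_Icc 3 M
  rw [h3, h4] at h1
  nlinarith [h1, h2]

lemma aux_count {V : Type*} [Fintype V] [DecidableEq V] (d : V → ℕ) (A : Finset V) (M c : ℕ)
    (hM : 3 ≤ M) (hle : ∀ v ∈ A, d v ≤ M)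
    (hinj : ∀ v ∈ A, ∀ w ∈ A, 3 ≤ d v → d v = d w → v = w)
    (hlow : ∑ v ∈ A.filter (fun v => ¬ 3 ≤ d v), d v ≤ c) :
    2 * (∑ v ∈ A, d v) + 6 * (Icc 3 M).card + 6 ≤
      M * (M + 1) + 6 * (A.filter (fun v => 3 ≤ d v)).card + 2 * c ∧
    (A.filter (fun v => 3 ≤ d v)).card ≤ (Icc 3 M).card := by
  classical
  set H := A.filter (fun v => 3 ≤ d v) with hH
  set L := A.filter (fun v => ¬ 3 ≤ d v) with hL
  have hsplit : (∑ v ∈ H, d v) + (∑ v ∈ L, d v) = ∑ v ∈ A, d v :=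
    Finset.sum_filter_add_sum_filter_not A _ d
  have hinj' : ∀ v ∈ H, ∀ w ∈ H, d v = d w → v = w := by
    intro v hv w hw hvw
    rw [hH, mem_filter] at hv hw
    exact hinj v hv.1 w hw.1 hv.2 hvw
  have himg : H.image d ⊆ Icc 3 M := by
    intro k hk
    rw [mem_image] at hk
    obtain ⟨v, hv, rfl⟩ := hk
    rw [hH, mem_filter] at hv
    exact mem_Icc.mpr ⟨hv.2, hle v hv.1⟩
  have hSH : (∑ v ∈ H, d v) = ∑ k ∈ H.image d, k := (Finset.sum_image (f := fun k => k) hinj').symm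
  have hcImg : (H.image d).card = H.card := Finset.card_image_of_injOn hinj'
  have hsd : (∑ k ∈ Icc 3 M \ H.image d, k) + (∑ k ∈ H.image d, k) = ∑ k ∈ Icc 3 M, k :=
    Finset.sum_sdiff himg
  have hsd3 : (Icc 3 M \ H.image d).card * 3 ≤ ∑ k ∈ Icc 3 M \ H.image d, k := by
    have := Finset.card_nsmul_le_sum (Icc 3 M \ H.image d) (fun k => k) 3
      (fun x hx => (mem_Icc.mp (mem_sdiff.mp hx).1).1)
    simpa [smul_eq_mul] using this
  have hcsd : (Icc 3 M \ H.image d).card + (H.image d).card = (Icc 3 M).card :=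
    Finset.card_sdiff_add_card_eq_card himg
  have hG := gauss_icc M hM
  constructor
  · omega
  · omega


theorem beta_bounds_even {V : Type*} [Fintype V] [DecidableEq V]
    (n : ℕ) (hn : 3 ≤ n) (G : SimpleGraph V) [DecidableRel G.Adj]
    (hcard : Fintype.card V = 2 * n)
    (hedges : n ^ 2 - 1 ≤ G.edgeFinset.card)
    (hpath : ¬ HasEqPath3 G)
    (β : ℕ)
    (hβ : IsGreatest {k | ∃ a b : V, a ≠ b ∧ G.degree a = k ∧ G.degree b = k} β) :
    3 ≤ β ∧ β ≤ G.maxDegree := by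
  unfold HasEqPath3 at hpath
  classical
  obtain ⟨⟨a, b, hab, hda, hdb⟩, hub⟩ := hβ
  refine ⟨?_, hda ▸ G.degree_le_maxDegree a⟩
  by_contra hb3
  have hβ2 : β ≤ 2 := by omega
  obtain ⟨m, rfl⟩ : ∃ m, n = m + 3 := ⟨n - 3, by omega⟩
  have hcard' : Fintype.card V = 2 * m + 6 := by omega
  -- F1 : repeated degrees are at most 2
  have F1 : ∀ v w : V, v ≠ w → G.degree v = G.degree w → G.degree v ≤ 2 := by
    intro v w hvw h
    exact le_trans (hub ⟨v, w, hvw, rfl, h.symm⟩) hβ2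
  have hda2 : G.degree a ≤ 2 := F1 a b hab (by rw [hda, hdb])
  have hdb2 : G.degree b ≤ 2 := F1 b a hab.symm (by rw [hda, hdb])
  have hdeglt : ∀ v : V, G.degree v ≤ 2 * m + 5 := by
    intro v
    have := G.degree_lt_card_verts v
    omega
  -- degree sum lower bound
  have hsum : 2 * (m + 3) ^ 2 ≤ (∑ v, G.degree v) + 2 := by
    rw [G.sum_degrees_eq_twice_card_edges]
    have h9 : (m + 3) ^ 2 = m * m + 6 * m + 9 := by ring
    omega
  -- universal vertex adjacency
  have huniv : ∀ u : V, G.degree u = 2 * m + 5 → ∀ v : V, v ≠ u → G.Adj u v := by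
    intro u hu v hv
    have hsub : G.neighborFinset u ⊆ univ.erase u := by
      intro x hx
      exact mem_erase.mpr ⟨(G.ne_of_adj (G.mem_neighborFinset u x |>.mp hx)).symm, mem_univ x⟩
    have hcards : (univ.erase u).card ≤ (G.neighborFinset u).card := by
      rw [G.card_neighborFinset_eq_degree, hu, Finset.card_erase_of_mem (mem_univ u),
        Finset.card_univ, hcard']
      omega
    have heq := Finset.eq_of_subset_of_card_le hsub hcards
    have : v ∈ G.neighborFinset u := by
      rw [heq]; exact mem_erase.mpr ⟨hv, mem_univ v⟩
    exact (G.mem_neighborFinset u v).mp this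
  -- F2 : no u of degree 2m+5 together with w of degree 2m+4
  have F2 : ∀ u w : V, u ≠ w → G.degree u = 2 * m + 5 → G.degree w = 2 * m + 4 → False := by
    intro u w huw hu hw
    have hau : a ≠ u := fun h => by rw [h, hu] at hda2; omega
    have haw : a ≠ w := fun h => by rw [h, hw] at hda2; omega
    have hbu : b ≠ u := fun h => by rw [h, hu] at hdb2; omega
    have hbw : b ≠ w := fun h => by rw [h, hw] at hdb2; omega
    have hdab : G.degree a = G.degree b := by rw [hda, hdb]
    by_cases hwb : G.Adj w b
    · exact hpath ⟨a, u, w, b, hau, haw, hab, huw, hbu.symm, hbw.symm,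
        (huniv u hu a hau).symm, huniv u hu w (Ne.symm huw), hwb, hdab⟩
    · have hwa : G.Adj w a := by
        by_contra hwa
        have hsub : G.neighborFinset w ⊆ ((univ.erase w).erase a).erase b := by
          intro x hx
          have hadj := (G.mem_neighborFinset w x).mp hx
          refine mem_erase.mpr ⟨fun h => hwb (h ▸ hadj), mem_erase.mpr
            ⟨fun h => hwa (h ▸ hadj), mem_erase.mpr ⟨(G.ne_of_adj hadj).symm, mem_univ x⟩⟩⟩
        have hc := Finset.card_le_card hsub
        rw [G.card_neighborFinset_eq_degree, hw] at hc
        have hbm : b ∈ (univ.erase w).erase a := mem_erase.mpr ⟨hab.symm,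
          mem_erase.mpr ⟨hbw, mem_univ b⟩⟩
        have ham : a ∈ univ.erase w := mem_erase.mpr ⟨haw, mem_univ a⟩
        rw [Finset.card_erase_of_mem hbm, Finset.card_erase_of_mem ham,
          Finset.card_erase_of_mem (mem_univ w), Finset.card_univ, hcard'] at hc
        omega
      exact hpath ⟨a, w, u, b, haw, hau, hab, Ne.symm huw, hbw.symm, hbu.symm,
        hwa.symm, (huniv u hu w (Ne.symm huw)).symm, huniv u hu b hbu, hdab⟩
  -- F3 : with a universal vertex, equal-degree vertices have neighbors only in {u, partner}
  have F3 : ∀ u : V, G.degree u = 2 * m + 5 → ∀ v w : V, v ≠ w →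
      G.degree v = G.degree w → ∀ x : V, G.Adj v x → x = u ∨ x = w := by
    intro u hu v w hvw hdvw x hvx
    by_contra hcon
    push_neg at hcon
    obtain ⟨hxu, hxw⟩ := hcon
    have hv2 : G.degree v ≤ 2 := F1 v w hvw hdvw
    have hvu : v ≠ u := fun h => by rw [h, hu] at hv2; omega
    have hw2 : G.degree w ≤ 2 := F1 w v hvw.symm hdvw.symm
    have hwu : u ≠ w := fun h => by rw [← h, hu] at hw2; omega
    exact hpath ⟨v, x, u, w, G.ne_of_adj hvx, hvu, hvw, hxu, hxw, hwu,
      hvx, (huniv u hu x hxu).symm, huniv u hu w (Ne.symm hwu), hdvw⟩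
  -- Counting
  by_cases hU : ∃ u : V, G.degree u = 2 * m + 5
  · -- Case B : a universal vertex exists
    obtain ⟨u, hu⟩ := hU
    set A : Finset V := univ.erase u with hA
    have hle : ∀ v ∈ A, G.degree v ≤ 2 * m + 3 := by
      intro v hv
      have hvne : v ≠ u := (mem_erase.mp hv).1
      by_contra hlt
      push_neg at hlt
      have h45 : G.degree v = 2 * m + 4 ∨ G.degree v = 2 * m + 5 := by
        have := hdeglt v; omega
      rcases h45 with h4 | h5
      · exact F2 u v (Ne.symm hvne) hu h4
      · have := F1 v u hvne (by rw [h5, hu]); omega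
    have hinj : ∀ v ∈ A, ∀ w ∈ A, 3 ≤ G.degree v → G.degree v = G.degree w → v = w := by
      intro v _ w _ h3 hvw
      by_contra hne
      have := F1 v w hne hvw
      omega
    set L : Finset V := A.filter (fun v => ¬ 3 ≤ G.degree v) with hLdef
    have hL2card : (L.filter (fun v => G.degree v = 2)).card ≤ 2 := by
      by_contra hgt
      push_neg at hgt
      obtain ⟨c1, c2, c3, h1, h2, h3, h12, h13, h23⟩ := Finset.two_lt_card_iff.mp hgt
      have hd1 : G.degree c1 = 2 := (mem_filter.mp h1).2
      have hd2 : G.degree c2 = 2 := (mem_filter.mp h2).2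
      have hd3 : G.degree c3 = 2 := (mem_filter.mp h3).2
      have hsub : G.neighborFinset c1 ⊆ {u} := by
        intro x hx
        have hadj := (G.mem_neighborFinset c1 x).mp hx
        rcases F3 u hu c1 c2 h12 (by rw [hd1, hd2]) x hadj with h | h
        · exact mem_singleton.mpr h
        · rcases F3 u hu c1 c3 h13 (by rw [hd1, hd3]) x hadj with h' | h'
          · exact mem_singleton.mpr h'
          · exact (h23 (h.symm.trans h')).elim
      have hcle := Finset.card_le_card hsub
      rw [G.card_neighborFinset_eq_degree, hd1, Finset.card_singleton] at hcle
      omega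
    have hlow : (∑ v ∈ L, G.degree v) ≤ L.card + 2 := by
      have hptw : ∀ v ∈ L, G.degree v ≤ 1 + (if G.degree v = 2 then 1 else 0) := by
        intro v hv
        have : ¬ 3 ≤ G.degree v := (mem_filter.mp hv).2
        split_ifs with h <;> omega
      calc (∑ v ∈ L, G.degree v) ≤ ∑ v ∈ L, (1 + if G.degree v = 2 then 1 else 0) :=
            Finset.sum_le_sum hptw
        _ = L.card + (L.filter (fun v => G.degree v = 2)).card := by
            rw [Finset.sum_add_distrib, Finset.sum_const, smul_eq_mul, mul_one]
            congr 1
            simp [Finset.sum_boole]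
        _ ≤ L.card + 2 := by omega
    obtain ⟨hmain, hHle⟩ := aux_count (fun v => G.degree v) A (2 * m + 3) (L.card + 2)
      (by omega) hle hinj hlow
    have hIcc : (Icc 3 (2 * m + 3)).card = 2 * m + 1 := by rw [Nat.card_Icc]; omega
    have hAcard : A.card = 2 * m + 5 := by
      rw [hA, Finset.card_erase_of_mem (mem_univ u), Finset.card_univ, hcard']
      omega
    have hHL : (A.filter (fun v => 3 ≤ G.degree v)).card + L.card = A.card :=
      Finset.card_filter_add_card_filter_not _
    have hsumA : (∑ v ∈ A, G.degree v) + G.degree u = ∑ v, G.degree v :=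
      Finset.sum_erase_add _ _ (mem_univ u)
    rw [hu] at hsumA
    rw [hIcc] at hmain hHle
    nlinarith [hmain, hHle, hHL, hsumA, hsum, hAcard]
  · -- Case A : no universal vertex
    push_neg at hU
    have hle : ∀ v ∈ (univ : Finset V), G.degree v ≤ 2 * m + 4 := by
      intro v _
      have h1 := hdeglt v
      have h2 := hU v
      omega
    have hinj : ∀ v ∈ (univ : Finset V), ∀ w ∈ (univ : Finset V),
        3 ≤ G.degree v → G.degree v = G.degree w → v = w := by
      intro v _ w _ h3 hvw
      by_contra hne
      have := F1 v w hne hvw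
      omega
    set L : Finset V := univ.filter (fun v => ¬ 3 ≤ G.degree v) with hLdef
    have hlow : (∑ v ∈ L, G.degree v) ≤ 2 * L.card := by
      have := Finset.sum_le_card_nsmul L (fun v => G.degree v) 2
        (fun v hv => by have := (mem_filter.mp hv).2; show G.degree v ≤ 2; omega)
      simpa [smul_eq_mul, mul_comm] using this
    obtain ⟨hmain, hHle⟩ := aux_count (fun v => G.degree v) univ (2 * m + 4) (2 * L.card)
      (by omega) hle hinj hlow
    have hIcc : (Icc 3 (2 * m + 4)).card = 2 * m + 2 := by rw [Nat.card_Icc]; omega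
    have hHL : ((univ : Finset V).filter (fun v => 3 ≤ G.degree v)).card + L.card
        = Fintype.card V := Finset.card_filter_add_card_filter_not _
    rw [hcard'] at hHL
    rw [hIcc] at hmain hHle
    nlinarith [hmain, hHle, hHL, hsum]
end

section
/- Under the even setup with n ≥ 6, either β ≥ Δ − 1 or Δ ≤ n + 2, where Δ denotes the maximum vertex degree of G. -/
open SimpleGraph

private lemma sum_Icc_mul_two' (a b : ℕ) :
    (∑ i ∈ Finset.Icc a b, i) * 2 = (b + 1 - a) * (a + b) := by
  induction b with
  | zero =>
    rcases Nat.eq_zero_or_pos a with h | h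
    · subst h; simp
    · rw [Finset.Icc_eq_empty (by omega)]
      simp
      omega
  | succ b ih =>
    rcases le_or_gt a (b + 1) with h | h
    · rw [Finset.sum_Icc_succ_top h]
      zify [show a ≤ b + 1 from h, show a ≤ b + 1 + 1 by omega] at *
      linear_combination ih
    · rw [Finset.Icc_eq_empty (by omega)]
      have : b + 1 + 1 - a = 0 := by omega
      simp [this]

private lemma final_arith (n D tc sH sJ sM smm srr sT cJ cH cSm cSr cLo : ℤ)
    (hn : 6 ≤ n) (hD : n + 3 ≤ D) (htc : tc = 2*n - 1 - D)
    (e1 : 2*(n^2-1) ≤ D + (sH + (smm + srr)) + sT)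
    (e2 : sT ≤ tc*(D-1))
    (e3 : sH = sM - sJ)
    (e4 : cJ*(tc+3) ≤ sJ)
    (e5 : sM*2 = (D - tc - 3)*((tc+3)+(D-1)))
    (e6 : smm ≤ cSm*(tc+2))
    (e7 : srr ≤ cSr*(tc+1))
    (c2 : cJ = (D - tc - 3) - cH)
    (c3 : cLo = D - cH)
    (c4 : cSr = cLo - cSm)
    (c5 : cSm ≤ 2) (c6 : 0 ≤ cJ) (c7 : 0 ≤ cSr) (c8 : 0 ≤ cSm) (c9 : 0 ≤ cH) : False := by
  subst htc c2 c3 c4 e3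
  nlinarith [e1, e2, e4, e5, e6, e7, c5, c6, c7, c8, c9, hn, hD]

set_option maxHeartbeats 2000000 in
theorem small_equal_degree_even {V : Type*} [Fintype V] [DecidableEq V]
    (n : ℕ) (hn : 6 ≤ n) (G : SimpleGraph V) [DecidableRel G.Adj]
    (hcard : Fintype.card V = 2 * n)
    (hedges : n ^ 2 - 1 ≤ G.edgeFinset.card)
    (hpath : ¬ HasEqPath3 G)
    (β : ℕ)
    (hβ : IsGreatest {k | ∃ a b : V, a ≠ b ∧ G.degree a = k ∧ G.degree b = k} β) :
    G.maxDegree - 1 ≤ β ∨ G.maxDegree ≤ n + 2 := by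
  classical
  by_cases hDle : G.maxDegree ≤ n + 2
  · exact Or.inr hDle
  push_neg at hDle
  left
  by_contra hb
  push_neg at hb
  set D := G.maxDegree with hDdef
  have hD : n + 3 ≤ D := hDle
  have hβ2 : β + 2 ≤ D := by omega
  -- upper-bound property of β
  have hub : ∀ a b : V, a ≠ b → G.degree a = G.degree b → G.degree a ≤ β := by
    intro a b hab h
    exact hβ.2 ⟨a, b, hab, rfl, h.symm⟩
  -- no equal-degree path of length 3
  have hnp : ∀ a x y b : V, G.Adj a x → G.Adj x y → G.Adj y b → a ≠ y → a ≠ b → x ≠ b →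
      G.degree a ≠ G.degree b := by
    intro a x y b h1 h2 h3 hay hab hxb hdeg
    exact hpath ⟨a, x, y, b, h1.ne, hay, hab, h2.ne, hxb, h3.ne, h1, h2, h3, hdeg⟩
  haveI : Nonempty V := by
    rw [← Fintype.card_pos_iff]; omega
  obtain ⟨v, hv⟩ := G.exists_maximal_degree_vertex
  -- uniqueness of the maximum degree vertex
  have hmax : ∀ a : V, a ≠ v → G.degree a + 1 ≤ D := by
    intro a ha
    rcases lt_or_eq_of_le (G.degree_le_maxDegree a) with h | h
    · omega
    · exfalso
      have := hub a v ha (by rw [h, hv])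
      omega
  set S := G.neighborFinset v with hSdef
  have hvS : v ∉ S := by simp [hSdef]
  have hScard : S.card = D := by
    rw [hSdef, G.card_neighborFinset_eq_degree]
    exact hv.symm
  set T := Finset.univ \ insert v S with hTdef
  set tc := T.card with htcdef
  have hmemT : ∀ a : V, a ∈ T ↔ a ≠ v ∧ a ∉ S := by
    intro a; simp [hTdef]
  have htc : tc + D + 1 = 2 * n := by
    have h1 : (insert v S).card = D + 1 := by
      rw [Finset.card_insert_of_notMem hvS, hScard]
    have h2 : T.card = Fintype.card V - (insert v S).card := by
      rw [hTdef, Finset.card_sdiff_of_subset (Finset.subset_univ _), Finset.card_univ]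
    have h3 : (insert v S).card ≤ Fintype.card V := Finset.card_le_card (Finset.subset_univ _)
    omega
  have hSadj : ∀ a : V, a ∈ S → G.Adj v a := by
    intro a ha; rwa [hSdef, SimpleGraph.mem_neighborFinset] at ha
  -- equal-degree pairs inside S have small degree
  have hpair : ∀ a b : V, a ∈ S → b ∈ S → a ≠ b → G.degree a = G.degree b →
      G.degree a ≤ tc + 2 := by
    intro a b ha hb hab hdeg
    have hsub : G.neighborFinset a ⊆ insert v (insert b T) := by
      intro y hy
      rw [SimpleGraph.mem_neighborFinset] at hy
      simp only [Finset.mem_insert]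
      by_contra hyn
      push_neg at hyn
      obtain ⟨hyv, hyb, hyT⟩ := hyn
      rw [hmemT] at hyT
      push_neg at hyT
      have hyS : y ∈ S := hyT hyv
      exact hnp b v y a ((hSadj b hb).symm) (hSadj y hyS) hy.symm
        (fun h => hyb h.symm) hab.symm (G.ne_of_adj (hSadj a ha)) hdeg.symm
    calc G.degree a = (G.neighborFinset a).card := (G.card_neighborFinset_eq_degree a).symm
      _ ≤ (insert v (insert b T)).card := Finset.card_le_card hsub
      _ ≤ (insert b T).card + 1 := Finset.card_insert_le _ _
      _ ≤ tc + 2 := by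
          have := Finset.card_insert_le b T
          omega
  -- equal-degree triples inside S have even smaller degree
  have htrip : ∀ a b c : V, a ∈ S → b ∈ S → c ∈ S → a ≠ b → a ≠ c → b ≠ c →
      G.degree a = G.degree b → G.degree a = G.degree c → G.degree a ≤ tc + 1 := by
    intro a b c ha hb hc hab hac hbc hdb hdc
    have hsub : G.neighborFinset a ⊆ insert v T := by
      intro y hy
      rw [SimpleGraph.mem_neighborFinset] at hy
      simp only [Finset.mem_insert]
      by_contra hyn
      push_neg at hyn
      obtain ⟨hyv, hyT⟩ := hyn
      rw [hmemT] at hyT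
      push_neg at hyT
      have hyS : y ∈ S := hyT hyv
      by_cases hyb : y = b
      · subst hyb
        exact hnp c v y a ((hSadj c hc).symm) (hSadj y hyS) hy.symm
          (fun h => hbc (h.symm)) hac.symm (G.ne_of_adj (hSadj a ha)) hdc.symm
      · exact hnp b v y a ((hSadj b hb).symm) (hSadj y hyS) hy.symm
          (fun h => hyb h.symm) hab.symm (G.ne_of_adj (hSadj a ha)) hdb.symm
    calc G.degree a = (G.neighborFinset a).card := (G.card_neighborFinset_eq_degree a).symm
      _ ≤ (insert v T).card := Finset.card_le_card hsub
      _ ≤ tc + 1 := Finset.card_insert_le _ _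
  -- total degree sum
  have hsum : 2 * (n ^ 2 - 1) ≤ ∑ x : V, G.degree x := by
    rw [G.sum_degrees_eq_twice_card_edges]
    omega
  have hsplit : ∑ x : V, G.degree x = G.degree v + ∑ x ∈ S, G.degree x + ∑ x ∈ T, G.degree x := by
    have h1 : ∑ x ∈ T, G.degree x + ∑ x ∈ insert v S, G.degree x = ∑ x : V, G.degree x := by
      rw [hTdef]
      exact Finset.sum_sdiff (Finset.subset_univ _)
    rw [Finset.sum_insert hvS] at h1
    omega
  have hTsum : ∑ x ∈ T, G.degree x ≤ tc * (D - 1) := by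
    apply Finset.sum_le_card_nsmul
    intro x hx
    have := hmax x ((hmemT x).mp hx).1
    omega
  -- split S by degree
  set Shi := S.filter (fun a => tc + 3 ≤ G.degree a) with hShidef
  set Slo := S.filter (fun a => ¬ (tc + 3 ≤ G.degree a)) with hSlodef
  have hSsum : ∑ x ∈ S, G.degree x = ∑ x ∈ Shi, G.degree x + ∑ x ∈ Slo, G.degree x :=
    (Finset.sum_filter_add_sum_filter_not S _ _).symm
  have hScards : Shi.card + Slo.card = D := by
    rw [hShidef, hSlodef, Finset.card_filter_add_card_filter_not, hScard]
  -- degrees are injective on Shi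
  have hinj : ∀ x ∈ Shi, ∀ y ∈ Shi, G.degree x = G.degree y → x = y := by
    intro x hx y hy hxy
    by_contra hne
    rw [hShidef, Finset.mem_filter] at hx hy
    have := hpair x y hx.1 hy.1 hne hxy
    omega
  set I : Finset ℕ := Shi.image (fun a => G.degree a) with hIdef
  have hIcard : I.card = Shi.card := Finset.card_image_of_injOn (fun x hx y hy => hinj x hx y hy)
  have hIsum : ∑ d ∈ I, d = ∑ x ∈ Shi, G.degree x := by
    rw [hIdef]
    exact Finset.sum_image (g := fun a => G.degree a) (f := fun d : ℕ => d) hinj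
  set M := Finset.Icc (tc + 3) (D - 1) with hMdef
  have hIsub : I ⊆ M := by
    intro d hd
    rw [hIdef, Finset.mem_image] at hd
    obtain ⟨a, ha, rfl⟩ := hd
    rw [hShidef, Finset.mem_filter] at ha
    rw [hMdef, Finset.mem_Icc]
    refine ⟨ha.2, ?_⟩
    have := hmax a (G.ne_of_adj (hSadj a ha.1)).symm
    omega
  have hMsum : ∑ d ∈ M \ I, d + ∑ d ∈ I, d = ∑ d ∈ M, d := Finset.sum_sdiff hIsub
  have hJlb : (M \ I).card * (tc + 3) ≤ ∑ d ∈ M \ I, d := by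
    have h := Finset.card_nsmul_le_sum (M \ I) (fun d => d) (tc + 3) (by
      intro d hd
      have := Finset.mem_sdiff.mp hd
      rw [hMdef, Finset.mem_Icc] at this
      exact (this.1).1)
    simpa [smul_eq_mul] using h
  have hJcard : (M \ I).card + I.card = M.card := Finset.card_sdiff_add_card_eq_card hIsub
  have hMcard : M.card + tc + 3 = D := by
    rw [hMdef, Nat.card_Icc]
    omega
  have hGauss : (∑ d ∈ M, d) * 2 = (D - 1 + 1 - (tc + 3)) * ((tc + 3) + (D - 1)) :=
    sum_Icc_mul_two' _ _
  -- split Slo further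
  set Sm := Slo.filter (fun a => G.degree a = tc + 2) with hSmdef
  set Sr := Slo.filter (fun a => ¬ (G.degree a = tc + 2)) with hSrdef
  have hSloSum : ∑ x ∈ Slo, G.degree x = ∑ x ∈ Sm, G.degree x + ∑ x ∈ Sr, G.degree x :=
    (Finset.sum_filter_add_sum_filter_not Slo _ _).symm
  have hSloCards : Sm.card + Sr.card = Slo.card := by
    rw [hSmdef, hSrdef, Finset.card_filter_add_card_filter_not]
  have hSm2 : Sm.card ≤ 2 := by
    by_contra h
    push_neg at h
    obtain ⟨a, b, c, ha, hb, hc, hab, hac, hbc⟩ := Finset.two_lt_card_iff.mp h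
    rw [hSmdef, Finset.mem_filter, hSlodef, Finset.mem_filter] at ha hb hc
    have := htrip a b c ha.1.1 hb.1.1 hc.1.1 hab hac hbc (by omega) (by omega)
    omega
  have hSmSum : ∑ x ∈ Sm, G.degree x ≤ Sm.card * (tc + 2) := by
    apply Finset.sum_le_card_nsmul
    intro x hx
    rw [hSmdef, Finset.mem_filter] at hx
    omega
  have hSrSum : ∑ x ∈ Sr, G.degree x ≤ Sr.card * (tc + 1) := by
    apply Finset.sum_le_card_nsmul
    intro x hx
    rw [hSrdef, Finset.mem_filter, hSlodef, Finset.mem_filter] at hx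
    omega
  -- final arithmetic
  have hvD : G.degree v = D := hv.symm
  have hD1 : (1:ℕ) ≤ D := by omega
  have htcD : tc + 3 ≤ D - 1 + 1 := by omega
  have e1 : 2 * ((n:ℤ) ^ 2 - 1) ≤ (D:ℤ) + ((∑ x ∈ Shi, (G.degree x : ℤ)) +
      ((∑ x ∈ Sm, (G.degree x : ℤ)) + (∑ x ∈ Sr, (G.degree x : ℤ)))) +
      (∑ x ∈ T, (G.degree x : ℤ)) := by
    have h := hsum
    rw [hsplit, hSsum, hSloSum, hvD] at h
    have hn2 : 1 ≤ n ^ 2 := Nat.one_le_pow 2 n (by omega)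
    zify [hn2] at h
    push_cast at h ⊢
    linarith
  have e2 : (∑ x ∈ T, (G.degree x : ℤ)) ≤ (tc : ℤ) * ((D:ℤ) - 1) := by
    have h := hTsum
    zify [hD1] at h
    push_cast at h ⊢
    linarith
  have e3 : (∑ x ∈ Shi, (G.degree x : ℤ)) = (∑ d ∈ M, (d:ℤ)) - (∑ d ∈ M \ I, (d:ℤ)) := by
    have h := hMsum
    have h2 := hIsum
    zify at h h2
    push_cast at h h2 ⊢
    linarith
  have e4 : (((M \ I).card : ℤ)) * ((tc:ℤ) + 3) ≤ ∑ d ∈ M \ I, (d:ℤ) := by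
    have h := hJlb
    zify at h
    push_cast at h ⊢
    linarith
  have e5 : (∑ d ∈ M, (d:ℤ)) * 2 = ((D:ℤ) - (tc:ℤ) - 3) * (((tc:ℤ) + 3) + ((D:ℤ) - 1)) := by
    have h := hGauss
    zify [hD1, htcD] at h
    push_cast at h ⊢
    linear_combination h
  have e6 : (∑ x ∈ Sm, (G.degree x : ℤ)) ≤ (Sm.card : ℤ) * ((tc:ℤ) + 2) := by
    have h := hSmSum
    zify at h
    push_cast at h ⊢
    linarith
  have e7 : (∑ x ∈ Sr, (G.degree x : ℤ)) ≤ (Sr.card : ℤ) * ((tc:ℤ) + 1) := by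
    have h := hSrSum
    zify at h
    push_cast at h ⊢
    linarith
  have c1 : (tc : ℤ) = 2 * (n:ℤ) - 1 - (D:ℤ) := by
    have := htc; push_cast; omega
  have c2 : ((M \ I).card : ℤ) = ((D:ℤ) - (tc:ℤ) - 3) - (Shi.card : ℤ) := by
    have h1 := hJcard; have h2 := hIcard; have h3 := hMcard
    push_cast; omega
  have c3 : (Slo.card : ℤ) = (D:ℤ) - (Shi.card : ℤ) := by
    have := hScards; push_cast; omega
  have c4 : (Sr.card : ℤ) = (Slo.card : ℤ) - (Sm.card : ℤ) := by
    have := hSloCards; push_cast; omega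
  have c5 : (Sm.card : ℤ) ≤ 2 := by exact_mod_cast hSm2
  have c6 : (0:ℤ) ≤ ((M \ I).card : ℤ) := Int.natCast_nonneg _
  have c7 : (0:ℤ) ≤ (Sr.card : ℤ) := Int.natCast_nonneg _
  have c8 : (0:ℤ) ≤ (Sm.card : ℤ) := Int.natCast_nonneg _
  have c9 : (0:ℤ) ≤ (Shi.card : ℤ) := Int.natCast_nonneg _
  have hnZ : (6 : ℤ) ≤ (n:ℤ) := by exact_mod_cast hn
  have hDZ : (n : ℤ) + 3 ≤ (D:ℤ) := by exact_mod_cast hD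
  exact final_arith (n:ℤ) (D:ℤ) (tc:ℤ) _ _ _ _ _ _ ((M \ I).card : ℤ) (Shi.card : ℤ)
    (Sm.card : ℤ) (Sr.card : ℤ) (Slo.card : ℤ) hnZ hDZ c1 e1 e2 e3 e4 e5 e6 e7 c2 c3 c4 c5 c6 c7 c8 c9
end

section
/- Under the even setup with n ≥ 5, suppose additionally that no two distinct vertices of G have the same degree strictly greater than n (i.e., β ≤ n). Then the maximum vertex degree of G is not equal to n + 2. -/
open SimpleGraph

theorem max_degree_ne_n_add_two_even {V : Type*} [Fintype V] [DecidableEq V]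
    (n : ℕ) (hn : 5 ≤ n) (G : SimpleGraph V) [DecidableRel G.Adj]
    (hcard : Fintype.card V = 2 * n)
    (hedges : n ^ 2 - 1 ≤ G.edgeFinset.card)
    (hpath : ¬ HasEqPath3 G)
    (hβ : ∀ a b : V, a ≠ b → G.degree a = G.degree b → G.degree a ≤ n) :
    G.maxDegree ≠ n + 2 := by
  classical
  intro hmax
  have hne : Nonempty V := by
    rw [← Fintype.card_pos_iff, hcard]; omega
  obtain ⟨v, hv⟩ := G.exists_maximal_degree_vertex
  have hdegv : G.degree v = n + 2 := by rw [← hv, hmax]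
  have hle : ∀ a : V, G.degree a ≤ n + 2 := fun a => hmax ▸ G.degree_le_maxDegree a
  -- the three degree classes
  set S : Finset V := Finset.univ.filter (fun a => G.degree a = n) with hSdef
  set T : Finset V := Finset.univ.filter (fun a => G.degree a < n) with hTdef
  set H : Finset V := Finset.univ.filter (fun a => n < G.degree a) with hHdef
  have hmemS : ∀ a, a ∈ S ↔ G.degree a = n := by
    intro a; simp [hSdef]
  have hmemT : ∀ a, a ∈ T ↔ G.degree a < n := by
    intro a; simp [hTdef]
  have hmemH : ∀ a, a ∈ H ↔ n < G.degree a := by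
    intro a; simp [hHdef]
  -- the degree map is injective on H
  have hinj : ∀ x ∈ H, ∀ y ∈ H, G.degree x = G.degree y → x = y := by
    intro x hx y hy hxy
    by_contra hne'
    have := hβ x y hne' hxy
    rw [hmemH] at hx; omega
  -- H has at most 2 elements
  have hHcard : H.card ≤ 2 := by
    have himg : H.image (fun x => G.degree x) ⊆ {n + 1, n + 2} := by
      intro d hd
      simp only [Finset.mem_image] at hd
      obtain ⟨x, hx, rfl⟩ := hd
      have h1 := hle x
      rw [hmemH] at hx
      simp only [Finset.mem_insert, Finset.mem_singleton]
      omega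
    have h2 := Finset.card_le_card himg
    rw [Finset.card_image_of_injOn (fun x hx y hy => hinj x hx y hy)] at h2
    exact h2.trans ((Finset.card_insert_le _ _).trans (by simp))
  -- sum of degrees over H
  have hsumH : ∑ x ∈ H, G.degree x ≤ H.card * n + 3 := by
    have h1 : ∑ x ∈ H, G.degree x = ∑ x ∈ H, (n + (G.degree x - n)) := by
      apply Finset.sum_congr rfl
      intro x hx; rw [hmemH] at hx; omega
    rw [h1, Finset.sum_add_distrib, Finset.sum_const, smul_eq_mul]
    have h2 : ∑ x ∈ H, (G.degree x - n) ≤ 3 := by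
      have hinj2 : ∀ x ∈ H, ∀ y ∈ H, G.degree x - n = G.degree y - n → x = y := by
        intro x hx y hy hxy
        have hx' := (hmemH x).mp hx
        have hy' := (hmemH y).mp hy
        exact hinj x hx y hy (by omega)
      have himg : H.image (fun x => G.degree x - n) ⊆ {1, 2} := by
        intro d hd
        simp only [Finset.mem_image] at hd
        obtain ⟨x, hx, rfl⟩ := hd
        have h1 := hle x
        rw [hmemH] at hx
        simp only [Finset.mem_insert, Finset.mem_singleton]
        omega
      calc ∑ x ∈ H, (G.degree x - n) = ∑ d ∈ H.image (fun x => G.degree x - n), d := by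
            rw [Finset.sum_image hinj2]
        _ ≤ ∑ d ∈ ({1, 2} : Finset ℕ), d := Finset.sum_le_sum_of_subset himg
        _ = 3 := by norm_num
    omega
  -- partition of the vertex set
  have hdisjTS : Disjoint T S := by
    rw [Finset.disjoint_left]
    intro a ha hb
    rw [hmemT] at ha; rw [hmemS] at hb; omega
  have hdisjTSH : Disjoint (T ∪ S) H := by
    rw [Finset.disjoint_left]
    intro a ha hb
    rw [Finset.mem_union, hmemT, hmemS] at ha
    rw [hmemH] at hb; omega
  have hunion : T ∪ S ∪ H = Finset.univ := by
    ext a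
    simp only [Finset.mem_union, hmemT, hmemS, hmemH, Finset.mem_univ, iff_true]
    omega
  have hcards : T.card + S.card + H.card = 2 * n := by
    have := Finset.card_union_of_disjoint hdisjTSH
    rw [hunion, Finset.card_union_of_disjoint hdisjTS, Finset.card_univ, hcard] at this
    omega
  -- total degree sum
  have hsum : 2 * n ^ 2 - 2 ≤ ∑ x : V, G.degree x := by
    rw [G.sum_degrees_eq_twice_card_edges]
    have : n ^ 2 - 1 ≤ G.edgeFinset.card := hedges
    have hn2 : 1 ≤ n ^ 2 := Nat.one_le_pow 2 n (by omega)
    omega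
  have hsumsplit : ∑ x : V, G.degree x
      = ∑ x ∈ T, G.degree x + ∑ x ∈ S, G.degree x + ∑ x ∈ H, G.degree x := by
    rw [← hunion, Finset.sum_union hdisjTSH, Finset.sum_union hdisjTS]
  have hsumT : ∑ x ∈ T, G.degree x ≤ T.card * (n - 1) := by
    apply Finset.sum_le_card_nsmul
    intro x hx; rw [hmemT] at hx; omega
  have hsumS : ∑ x ∈ S, G.degree x = S.card * n := by
    rw [Finset.sum_congr rfl (fun x hx => (hmemS x).mp hx), Finset.sum_const, smul_eq_mul]
  -- conclude: T is small, S is large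
  have hScard : 2 * n - 7 ≤ S.card := by
    have e1 : T.card * (n - 1) + T.card = T.card * n := by
      have h : n - 1 + 1 = n := by omega
      calc T.card * (n - 1) + T.card = T.card * ((n - 1) + 1) := by ring
        _ = T.card * n := by rw [h]
    have e2 : T.card * n + S.card * n + H.card * n = 2 * n ^ 2 := by
      calc T.card * n + S.card * n + H.card * n = (T.card + S.card + H.card) * n := by ring
        _ = 2 * n * n := by rw [hcards]
        _ = 2 * n ^ 2 := by ring
    have hkey : 2 * n ^ 2 - 2 ≤ T.card * (n - 1) + S.card * n + (H.card * n + 3) := by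
      calc 2 * n ^ 2 - 2 ≤ ∑ x : V, G.degree x := hsum
        _ = ∑ x ∈ T, G.degree x + ∑ x ∈ S, G.degree x + ∑ x ∈ H, G.degree x := hsumsplit
        _ ≤ T.card * (n - 1) + S.card * n + (H.card * n + 3) :=
            add_le_add (add_le_add hsumT hsumS.le) hsumH
    have hn2 : 2 ≤ 2 * n ^ 2 := by
      have := Nat.one_le_pow 2 n (by omega)
      omega
    omega
  -- v has no neighbor of degree n
  have hSv : ∀ b ∈ S, ¬ G.Adj v b := by
    intro b hb hadj
    have hdegb : G.degree b = n := (hmemS b).mp hb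
    obtain ⟨a, ha, hab⟩ := Finset.exists_mem_ne (by omega : 1 < S.card) b
    have hdega : G.degree a = n := (hmemS a).mp ha
    have hav : a ≠ v := by intro h; rw [h, hdegv] at hdega; omega
    have hsub : G.neighborFinset a ⊆
        insert b ((Finset.univ \ G.neighborFinset v).erase a) := by
      intro x hx
      rw [SimpleGraph.mem_neighborFinset] at hx
      by_cases hxv : G.Adj v x
      · rcases eq_or_ne x b with rfl | hxb
        · exact Finset.mem_insert_self _ _
        · exact absurd ⟨a, x, v, b, hx.ne, hav, hab, hxv.ne', hxb, hadj.ne,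
            hx, hxv.symm, hadj, by rw [hdega, hdegb]⟩ hpath
      · apply Finset.mem_insert_of_mem
        rw [Finset.mem_erase, Finset.mem_sdiff, SimpleGraph.mem_neighborFinset]
        exact ⟨hx.ne', Finset.mem_univ x, hxv⟩
    have hc1 : (G.neighborFinset a).card ≤
        ((Finset.univ \ G.neighborFinset v).erase a).card + 1 :=
      le_trans (Finset.card_le_card hsub) (Finset.card_insert_le _ _)
    have hc2 : (Finset.univ \ G.neighborFinset v).card = 2 * n - (n + 2) := by
      rw [Finset.card_sdiff_of_subset (Finset.subset_univ _), Finset.card_univ, hcard,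
        G.card_neighborFinset_eq_degree, hdegv]
    have hc3 : ((Finset.univ \ G.neighborFinset v).erase a).card
        ≤ (Finset.univ \ G.neighborFinset v).card := Finset.card_erase_le
    rw [G.card_neighborFinset_eq_degree, hdega] at hc1
    omega
  -- all of S lies among the non-neighbors of v, distinct from v
  have hSsub : S ⊆ (Finset.univ \ G.neighborFinset v).erase v := by
    intro a ha
    have hdega : G.degree a = n := (hmemS a).mp ha
    rw [Finset.mem_erase, Finset.mem_sdiff, SimpleGraph.mem_neighborFinset]
    refine ⟨?_, Finset.mem_univ a, hSv a ha⟩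
    intro h; rw [h, hdegv] at hdega; omega
  have hfinal : S.card ≤ 2 * n - (n + 2) - 1 := by
    have h1 := Finset.card_le_card hSsub
    have hvmem : v ∈ Finset.univ \ G.neighborFinset v := by
      rw [Finset.mem_sdiff, SimpleGraph.mem_neighborFinset]
      exact ⟨Finset.mem_univ v, G.irrefl⟩
    rw [Finset.card_erase_of_mem hvmem, Finset.card_sdiff_of_subset (Finset.subset_univ _),
      Finset.card_univ, hcard, G.card_neighborFinset_eq_degree, hdegv] at h1
    exact h1
  omega
end

section
/- Under the even setup with n ≥ 4, suppose additionally that no two distinct vertices of G have the same degree strictly greater than n (i.e., β ≤ n). Then the maximum vertex degree of G is not equal to n + 1. -/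
open SimpleGraph

theorem max_degree_ne_n_add_one_even {V : Type*} [Fintype V] [DecidableEq V]
    (n : ℕ) (hn : 4 ≤ n) (G : SimpleGraph V) [DecidableRel G.Adj]
    (hcard : Fintype.card V = 2 * n)
    (hedges : n ^ 2 - 1 ≤ G.edgeFinset.card)
    (hpath : ¬ HasEqPath3 G)
    (hβ : ∀ a b : V, a ≠ b → G.degree a = G.degree b → G.degree a ≤ n) :
    G.maxDegree ≠ n + 1 := by
  intro hΔ
  classical
  have hnV : Nonempty V := by
    have : 0 < Fintype.card V := by omega
    exact Fintype.card_pos_iff.mp this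
  obtain ⟨v, hv⟩ := G.exists_maximal_degree_vertex
  rw [hΔ] at hv
  have hdegv : G.degree v = n + 1 := hv.symm
  have hle : ∀ u, G.degree u ≤ n + 1 := fun u => hΔ ▸ G.degree_le_maxDegree u
  have hlen : ∀ u, u ≠ v → G.degree u ≤ n := by
    intro u huv
    by_contra h
    have h1 : G.degree u = n + 1 := by have := hle u; omega
    have h2 := hβ u v huv (by rw [h1, hdegv])
    omega
  have hsum : ∑ u, G.degree u = 2 * G.edgeFinset.card :=
    G.sum_degrees_eq_twice_card_edges
  set E := Finset.univ.erase v with hE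
  have hcE : E.card + 1 = 2 * n := by
    rw [hE, Finset.card_erase_of_mem (Finset.mem_univ v), Finset.card_univ, hcard]
    omega
  have hsplit : G.degree v + ∑ u ∈ E, G.degree u = ∑ u, G.degree u := by
    rw [hE]
    exact Finset.add_sum_erase Finset.univ (fun u => G.degree u) (Finset.mem_univ v)
  have hAB : (∑ u ∈ E, G.degree u) + (∑ u ∈ E, (n - G.degree u)) = E.card * n := by
    have h1 : ∀ u ∈ E, G.degree u + (n - G.degree u) = n := fun u hu => by
      have := hlen u (Finset.ne_of_mem_erase hu); omega
    calc (∑ u ∈ E, G.degree u) + (∑ u ∈ E, (n - G.degree u))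
        = ∑ u ∈ E, (G.degree u + (n - G.degree u)) := (Finset.sum_add_distrib).symm
      _ = ∑ u ∈ E, n := Finset.sum_congr rfl h1
      _ = E.card * n := by rw [Finset.sum_const, smul_eq_mul]
  have hcn : E.card * n + n = 2 * (n * n) := by
    calc E.card * n + n = (E.card + 1) * n := by ring
      _ = 2 * n * n := by rw [hcE]
      _ = 2 * (n * n) := by ring
  have hsq : n ^ 2 = n * n := sq n
  have hedges' : n * n ≤ G.edgeFinset.card + 1 :=
    Nat.sub_le_iff_le_add.mp (hsq ▸ hedges)
  have hA2 : n + 1 + (∑ u ∈ E, G.degree u) = 2 * G.edgeFinset.card := by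
    rw [← hdegv, hsplit, hsum]
  have hABn : (∑ u ∈ E, G.degree u) + (∑ u ∈ E, (n - G.degree u)) + n = 2 * (n * n) := by
    rw [hAB]; exact hcn
  have hB : (∑ u ∈ E, (n - G.degree u)) ≤ 3 := by linarith
  set T := E.filter (fun u => G.degree u < n) with hTdef
  set S := E.filter (fun u => G.degree u = n) with hSdef
  have hTcard : T.card ≤ 3 := by
    have h1 : T.card ≤ ∑ u ∈ T, (n - G.degree u) := by
      rw [Finset.card_eq_sum_ones]
      apply Finset.sum_le_sum
      intro u hu
      have := (Finset.mem_filter.mp hu).2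
      omega
    have h2 : ∑ u ∈ T, (n - G.degree u) ≤ ∑ u ∈ E, (n - G.degree u) :=
      Finset.sum_le_sum_of_subset (Finset.filter_subset _ _)
    omega
  have hScard : 2 * n - 4 ≤ S.card := by
    have hsub : E ⊆ S ∪ T := by
      intro u hu
      have h1 := hlen u (Finset.ne_of_mem_erase hu)
      rcases lt_or_eq_of_le h1 with h | h
      · exact Finset.mem_union_right _ (Finset.mem_filter.mpr ⟨hu, h⟩)
      · exact Finset.mem_union_left _ (Finset.mem_filter.mpr ⟨hu, h⟩)
    have h3 := (Finset.card_le_card hsub).trans (Finset.card_union_le S T)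
    omega
  have hSmem : ∀ u ∈ S, u ≠ v ∧ G.degree u = n := fun u hu =>
    ⟨Finset.ne_of_mem_erase (Finset.mem_filter.mp hu).1, (Finset.mem_filter.mp hu).2⟩
  have hNv : (G.neighborFinset v).card = n + 1 := by
    rw [G.card_neighborFinset_eq_degree, hdegv]
  have lemA : ∀ a b, a ∈ S → b ∈ S → a ≠ b → G.Adj v a → G.Adj v b ∧ G.Adj a b := by
    intro a b haS hbS hab hva
    obtain ⟨hav, hda⟩ := hSmem a haS
    obtain ⟨hbv, hdb⟩ := hSmem b hbS
    have key : ∀ y, G.Adj v y → G.Adj b y → y = a := by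
      intro y hvy hby
      by_contra hya
      exact hpath ⟨a, v, y, b, hav, Ne.symm hya, hab, hvy.ne, Ne.symm hbv, hby.ne',
        hva.symm, hvy, hby.symm, by rw [hda, hdb]⟩
    have hcardb : (Finset.univ \ G.neighborFinset b).card = n := by
      rw [Finset.card_sdiff_of_subset (Finset.subset_univ _), Finset.card_univ, hcard,
        G.card_neighborFinset_eq_degree, hdb]
      omega
    have hvb : G.Adj v b := by
      by_contra hvb
      have hsub2 : G.neighborFinset v ⊆
          insert a ((Finset.univ \ G.neighborFinset b).erase v) := by
        intro y hy
        rw [SimpleGraph.mem_neighborFinset] at hy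
        by_cases hyb : G.Adj b y
        · rw [key y hy hyb]; exact Finset.mem_insert_self _ _
        · refine Finset.mem_insert_of_mem (Finset.mem_erase.mpr ⟨hy.ne', ?_⟩)
          rw [Finset.mem_sdiff, SimpleGraph.mem_neighborFinset]
          exact ⟨Finset.mem_univ _, hyb⟩
      have hvm : v ∈ Finset.univ \ G.neighborFinset b := by
        rw [Finset.mem_sdiff, SimpleGraph.mem_neighborFinset]
        exact ⟨Finset.mem_univ _, fun h => hvb h.symm⟩
      have h4 := Finset.card_le_card hsub2
      have h5 := Finset.card_insert_le a ((Finset.univ \ G.neighborFinset b).erase v)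
      have h6 := Finset.card_erase_of_mem hvm
      omega
    refine ⟨hvb, ?_⟩
    by_contra hab'
    have hsub2 : G.neighborFinset v ⊆ Finset.univ \ G.neighborFinset b := by
      intro y hy
      rw [SimpleGraph.mem_neighborFinset] at hy
      rw [Finset.mem_sdiff, SimpleGraph.mem_neighborFinset]
      refine ⟨Finset.mem_univ _, fun hby => ?_⟩
      have hya : y = a := key y hy hby
      rw [hya] at hby
      exact hab' hby.symm
    have h4 := Finset.card_le_card hsub2
    omega
  by_cases hex : ∃ a ∈ S, G.Adj v a
  · obtain ⟨a, haS, hva⟩ := hex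
    have hvall : ∀ b ∈ S, G.Adj v b := by
      intro b hbS
      by_cases h : b = a
      · rw [h]; exact hva
      · exact (lemA a b haS hbS (fun h' => h h'.symm) hva).1
    have hclq : ∀ b ∈ S, ∀ c ∈ S, b ≠ c → G.Adj b c :=
      fun b hb c hc hbc => (lemA b c hb hc hbc (hvall b hb)).2
    obtain ⟨a1, h1⟩ := Finset.card_pos.mp (show 0 < S.card by omega)
    obtain ⟨a2, h2⟩ := Finset.card_pos.mp (show 0 < (S.erase a1).card by
      rw [Finset.card_erase_of_mem h1]; omega)
    obtain ⟨a3, h3⟩ := Finset.card_pos.mp (show 0 < ((S.erase a1).erase a2).card by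
      rw [Finset.card_erase_of_mem h2, Finset.card_erase_of_mem h1]; omega)
    obtain ⟨a4, h4⟩ := Finset.card_pos.mp
      (show 0 < (((S.erase a1).erase a2).erase a3).card by
        rw [Finset.card_erase_of_mem h3, Finset.card_erase_of_mem h2,
          Finset.card_erase_of_mem h1]; omega)
    have h4' := Finset.mem_of_mem_erase h4
    have h4'' := Finset.mem_of_mem_erase h4'
    have ha4S : a4 ∈ S := Finset.mem_of_mem_erase h4''
    have h3' := Finset.mem_of_mem_erase h3
    have ha3S : a3 ∈ S := Finset.mem_of_mem_erase h3'
    have ha2S : a2 ∈ S := Finset.mem_of_mem_erase h2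
    have hne43 : a4 ≠ a3 := Finset.ne_of_mem_erase h4
    have hne42 : a4 ≠ a2 := Finset.ne_of_mem_erase h4'
    have hne41 : a4 ≠ a1 := Finset.ne_of_mem_erase h4''
    have hne32 : a3 ≠ a2 := Finset.ne_of_mem_erase h3
    have hne31 : a3 ≠ a1 := Finset.ne_of_mem_erase h3'
    have hne21 : a2 ≠ a1 := Finset.ne_of_mem_erase h2
    exact hpath ⟨a1, a3, a4, a2, Ne.symm hne31, Ne.symm hne41, Ne.symm hne21,
      Ne.symm hne43, hne32, hne42,
      hclq a1 h1 a3 ha3S (Ne.symm hne31), hclq a3 ha3S a4 ha4S (Ne.symm hne43),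
      hclq a4 ha4S a2 ha2S hne42,
      by rw [(hSmem a1 h1).2, (hSmem a2 ha2S).2]⟩
  · push_neg at hex
    have hvns : v ∉ S := fun h => by
      have h1 := (hSmem v h).2
      omega
    have hsub : G.neighborFinset v ⊆ Finset.univ \ insert v S := by
      intro y hy
      rw [SimpleGraph.mem_neighborFinset] at hy
      rw [Finset.mem_sdiff, Finset.mem_insert]
      refine ⟨Finset.mem_univ _, fun h => ?_⟩
      rcases h with h | h
      · exact hy.ne' h
      · exact hex y h hy
    have hci : (insert v S).card = S.card + 1 := Finset.card_insert_of_notMem hvns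
    have h4 := Finset.card_le_card hsub
    have h5 : (Finset.univ \ insert v S).card = 2 * n - (S.card + 1) := by
      rw [Finset.card_sdiff_of_subset (Finset.subset_univ _), Finset.card_univ, hcard, hci]
    omega
end
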